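/- arXiv:1610.05246 — 6 statements merged into one kernel-verified Lean document; each statement's English description precedes it below -/
import Mathlib

section
/- Let n ≥ 1 be an integer, α ∈ [0,1), and let P₀ denote the uniform probability measure on [0,1]² ⊆ ℝ² (two-dimensional Lebesgue measure restricted to the unit square). Let C ⊆ (ℝ²)^n be a Borel set such that the n-fold product measure P₀^{⊗n} assigns measure 0 to the topological frontier of C and P₀^{⊗n}(C) ≤ α. Then for every ε > 0 there exists a Borel probability measure F on ℝ², supported in [0,1]², whose pushforwards under the two coordinate projections (x,y) ↦ x and (x,y) ↦ y both equal the uniform distribution on [0,1], which is mutually singular with respect to P₀ (hence at total-variation distance 1 from P₀, so F is a valid alternative with TV(F,P₀) ≥ δ for every δ ∈ (0,1]), and such that F^{⊗n}(C) ≤ α + ε. -/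
/-! The alternatives are the laws `F_m` of `(U, fract (m U))` with `U` uniform on `[0,1]`.
Both marginals of `F_m` are uniform and `F_m` lives on the Lebesgue-null graph of the sawtooth
`x ↦ fract (m x)`, yet `F_m` gives every cell of the `1/m`-grid of `[0,1)²` its Lebesgue mass
`1/m²`. Hence `F_m^⊗n` and `P₀^⊗n` agree on the grid boxes of mesh `1/m` in `(ℝ²)ⁿ`, and
covering `C` by the boxes that meet it gives `F_m^⊗n(C) ≤ P₀^⊗n(C_δ)` for the `δ`-thickening
`C_δ` of `C`, as soon as `1/m < δ`. As `δ → 0`, `P₀^⊗n(C_δ)` decreases to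
`P₀^⊗n(closure C) = P₀^⊗n(C) ≤ α`, because the frontier of `C` is null. -/

open MeasureTheory
open scoped ENNReal

/-- `P₀`: the uniform probability measure on the unit square `[0,1]² ⊆ ℝ²`
(two-dimensional Lebesgue measure restricted to the unit square). -/
noncomputable abbrev unifSquare : Measure (ℝ × ℝ) :=
  volume.restrict (Set.Icc (0 : ℝ) 1 ×ˢ Set.Icc (0 : ℝ) 1)

open Set Metric Function

theorem measure_le_measure_thickening_of_eq_on_partition {X ι : Type*} [PseudoMetricSpace X]
    [MeasurableSpace X] [Countable ι] {μ ν : Measure X} {B : ι → Set X} {δ : ℝ}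
    (hdisj : Pairwise (Disjoint on B)) (hmeas : ∀ k, MeasurableSet (B k))
    (hcover : μ (⋃ k, B k)ᶜ = 0) (hdist : ∀ k, ∀ x ∈ B k, ∀ y ∈ B k, dist x y < δ)
    (heq : ∀ k, μ (B k) = ν (B k)) (F : Set X) :
    μ F ≤ ν (thickening δ F) := by
  set S := {k | (B k ∩ F).Nonempty}
  have hF : F ≤ᵐ[μ] ⋃ k ∈ S, B k := by
    filter_upwards [compl_mem_ae_iff.mpr hcover] with x hx hxF
    obtain ⟨k, hk⟩ := mem_iUnion.mp (not_not.mp hx)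
    exact mem_biUnion (show k ∈ S from ⟨x, hk, hxF⟩) hk
  have hthick : ⋃ k ∈ S, B k ⊆ thickening δ F := by
    refine iUnion₂_subset fun k ⟨y, hyk, hyF⟩ x hxk => ?_
    exact mem_thickening_iff.mpr ⟨y, hyF, hdist k x hxk y hyk⟩
  calc μ F ≤ μ (⋃ k ∈ S, B k) := measure_mono_ae hF
    _ = ∑' k : S, μ (B k) :=
      measure_biUnion S.to_countable (hdisj.set_pairwise S) fun k _ => hmeas k
    _ = ∑' k : S, ν (B k) := by simp_rw [heq]
    _ = ν (⋃ k ∈ S, B k) :=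
      (measure_biUnion S.to_countable (hdisj.set_pairwise S) fun k _ => hmeas k).symm
    _ ≤ ν (thickening δ F) := measure_mono hthick

def gridCell (m i : ℕ) : Set ℝ := Ico (i / m) ((i + 1) / m)

theorem pairwise_disjoint_gridCell (m : ℕ) : Pairwise (Disjoint on gridCell m) := by
  have hmono : Monotone fun i : ℕ => (i : ℝ) / m := fun _ _ hij =>
    div_le_div_of_nonneg_right (by exact_mod_cast hij) m.cast_nonneg
  have := hmono.pairwise_disjoint_on_Ico_succ
  simp only [Order.succ_eq_add_one, Nat.cast_add, Nat.cast_one] at this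
  exact this

theorem gridCell_subset_Ico {m i : ℕ} (hi : i < m) : gridCell m i ⊆ Ico 0 1 := by
  have hm : (0 : ℝ) < m := by exact_mod_cast (Nat.zero_le i).trans_lt hi
  have him : (i : ℝ) + 1 ≤ m := by exact_mod_cast hi
  refine Ico_subset_Ico (by positivity) ?_
  rwa [div_le_one hm]

theorem iUnion_gridCell {m : ℕ} (hm : 0 < m) : ⋃ i : Fin m, gridCell m i = Ico 0 1 := by
  have hm' : (0 : ℝ) < m := by exact_mod_cast hm
  refine (iUnion_subset fun i => gridCell_subset_Ico i.isLt).antisymm fun x ⟨hx0, hx1⟩ => ?_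
  have hmx : 0 ≤ (m : ℝ) * x := by positivity
  refine mem_iUnion.mpr ⟨⟨⌊m * x⌋₊, (Nat.floor_lt hmx).mpr (by nlinarith)⟩, ?_, ?_⟩
  · rw [div_le_iff₀' hm']
    exact Nat.floor_le hmx
  · rw [lt_div_iff₀' hm']
    exact Nat.lt_floor_add_one _

theorem dist_lt_of_mem_gridCell {m i : ℕ} {x y : ℝ} (hx : x ∈ gridCell m i)
    (hy : y ∈ gridCell m i) : dist x y < 1 / m := by
  have hwidth : ((i : ℝ) + 1) / m - i / m = 1 / m := by ring
  rw [Real.dist_eq, abs_sub_lt_iff]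
  constructor <;> linarith [hx.1, hx.2, hy.1, hy.2]

theorem volume_gridCell (m i : ℕ) : volume (gridCell m i) = ENNReal.ofReal (1 / m) := by
  rw [gridCell, Real.volume_Ico]
  congr 1
  ring

theorem fract_mul_preimage_Ico_inter_gridCell {m : ℕ} (hm : 0 < m) {a b : ℝ} (ha : 0 ≤ a)
    (hb : b ≤ 1) (i : ℕ) :
    (fun x : ℝ => Int.fract (m * x)) ⁻¹' Ico a b ∩ gridCell m i =
      Ico ((i + a) / m) ((i + b) / m) := by
  have hm' : (0 : ℝ) < m := by exact_mod_cast hm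
  have hfract : ∀ x : ℝ, (i : ℝ) ≤ m * x → m * x < i + 1 → Int.fract (m * x) = m * x - i :=
    fun x h₀ h₁ => Int.fract_eq_iff.mpr ⟨by linarith, by linarith, i, by push_cast; ring⟩
  ext x
  simp only [gridCell, mem_inter_iff, mem_preimage, mem_Ico, div_le_iff₀' hm', lt_div_iff₀' hm']
  constructor
  · rintro ⟨⟨hax, hxb⟩, hix, hxi⟩
    rw [hfract x hix hxi] at hax hxb
    constructor <;> linarith
  · rintro ⟨hax, hxb⟩
    rw [hfract x (by linarith) (by linarith)]
    refine ⟨⟨?_, ?_⟩, ?_, ?_⟩ <;> linarith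

noncomputable def fractGraph (m : ℕ) (x : ℝ) : ℝ × ℝ := (x, Int.fract (m * x))

theorem measurable_fractGraph (m : ℕ) : Measurable (fractGraph m) :=
  measurable_id.prodMk (measurable_const.mul measurable_id).fract

noncomputable def fractGraphMeasure (m : ℕ) : Measure (ℝ × ℝ) :=
  (volume.restrict (Ico 0 1)).map (fractGraph m)

instance : IsProbabilityMeasure (volume.restrict (Ico (0 : ℝ) 1)) :=
  ⟨by simp⟩

instance (m : ℕ) : IsProbabilityMeasure (fractGraphMeasure m) :=
  Measure.isProbabilityMeasure_map (measurable_fractGraph m).aemeasurable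

theorem volume_restrict_Ico_eq_Icc :
    volume.restrict (Ico (0 : ℝ) 1) = volume.restrict (Icc 0 1) :=
  Measure.restrict_congr_set Ico_ae_eq_Icc

theorem fractGraphMeasure_map_fst (m : ℕ) :
    (fractGraphMeasure m).map Prod.fst = volume.restrict (Icc 0 1) := by
  rw [fractGraphMeasure, Measure.map_map measurable_fst (measurable_fractGraph m)]
  exact (Measure.map_id).trans volume_restrict_Ico_eq_Icc

theorem volume_fract_mul_preimage_Ico_inter {m : ℕ} (hm : 0 < m) {a b : ℝ} (ha : 0 ≤ a)
    (hb : b ≤ 1) :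
    volume ((fun x : ℝ => Int.fract (m * x)) ⁻¹' Ico a b ∩ Ico 0 1) = ENNReal.ofReal (b - a) := by
  have hm' : (0 : ℝ) < m := by exact_mod_cast hm
  have hdisj : Pairwise (Disjoint on fun i : Fin m =>
      (fun x : ℝ => Int.fract (m * x)) ⁻¹' Ico a b ∩ gridCell m i) := fun i j hij =>
    (pairwise_disjoint_gridCell m (Fin.val_injective.ne hij)).mono
      inter_subset_right inter_subset_right
  have hlen : ∀ i : ℕ, ((i : ℝ) + b) / m - (i + a) / m = (b - a) / m := fun i => by ring
  rw [← iUnion_gridCell hm, inter_iUnion, measure_iUnion hdisj fun i =>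
      ((measurable_const.mul measurable_id).fract measurableSet_Ico).inter measurableSet_Ico,
    tsum_fintype]
  simp_rw [fract_mul_preimage_Ico_inter_gridCell hm ha hb, Real.volume_Ico, hlen]
  rw [Finset.sum_const, Finset.card_univ, Fintype.card_fin, nsmul_eq_mul,
    ← ENNReal.ofReal_natCast, ← ENNReal.ofReal_mul m.cast_nonneg, mul_div_cancel₀ _ hm'.ne']

theorem map_fract_mul_volume_restrict_Ico {m : ℕ} (hm : 0 < m) :
    (volume.restrict (Ico (0 : ℝ) 1)).map (fun x : ℝ => Int.fract (m * x)) =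
      volume.restrict (Ico (0 : ℝ) 1) := by
  have hmeas : Measurable fun x : ℝ => Int.fract (m * x) :=
    (measurable_const.mul measurable_id).fract
  refine Measure.ext_of_Ico _ _ fun a b _ => ?_
  have hrange : (fun x : ℝ => Int.fract (m * x)) ⁻¹' Ico a b =
      (fun x : ℝ => Int.fract (m * x)) ⁻¹' Ico (max a 0) (min b 1) := by
    ext x
    simp only [mem_preimage, mem_Ico, max_le_iff, lt_min_iff]
    have := Int.fract_nonneg (m * x)
    have := Int.fract_lt_one (m * x)
    tauto
  rw [Measure.map_apply hmeas measurableSet_Ico, Measure.restrict_apply measurableSet_Ico,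
    Measure.restrict_apply (hmeas measurableSet_Ico), Ico_inter_Ico, hrange,
    volume_fract_mul_preimage_Ico_inter hm (le_max_right a 0) (min_le_right b 1),
    Real.volume_Ico]

theorem fractGraphMeasure_map_snd {m : ℕ} (hm : 0 < m) :
    (fractGraphMeasure m).map Prod.snd = volume.restrict (Icc 0 1) := by
  rw [fractGraphMeasure, Measure.map_map measurable_snd (measurable_fractGraph m),
    ← volume_restrict_Ico_eq_Icc]
  exact map_fract_mul_volume_restrict_Ico hm

theorem fractGraphMeasure_compl_Ico_prod_Ico (m : ℕ) :
    fractGraphMeasure m (Ico (0 : ℝ) 1 ×ˢ Ico (0 : ℝ) 1)ᶜ = 0 := by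
  have hpre : fractGraph m ⁻¹' (Ico 0 1 ×ˢ Ico 0 1)ᶜ = (Ico 0 1)ᶜ := by
    ext x
    simp [fractGraph, Int.fract_nonneg, Int.fract_lt_one]
  rw [fractGraphMeasure, Measure.map_apply (measurable_fractGraph m)
    (measurableSet_Ico.prod measurableSet_Ico).compl, hpre,
    Measure.restrict_apply measurableSet_Ico.compl, compl_inter_self, measure_empty]

theorem fractGraphMeasure_Ico_prod_Ico (m : ℕ) :
    fractGraphMeasure m (Ico (0 : ℝ) 1 ×ˢ Ico (0 : ℝ) 1) = 1 :=
  (prob_compl_eq_zero_iff (measurableSet_Ico.prod measurableSet_Ico)).mp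
    (fractGraphMeasure_compl_Ico_prod_Ico m)

theorem fractGraphMeasure_compl_unitSquare (m : ℕ) :
    fractGraphMeasure m (Icc (0 : ℝ) 1 ×ˢ Icc (0 : ℝ) 1)ᶜ = 0 :=
  measure_mono_null (compl_subset_compl.mpr (prod_mono Ico_subset_Icc_self Ico_subset_Icc_self))
    (fractGraphMeasure_compl_Ico_prod_Ico m)

theorem fractGraphMeasure_mutuallySingular_unifSquare (m : ℕ) :
    fractGraphMeasure m ⟂ₘ unifSquare := by
  set S : Set (ℝ × ℝ) := {p | p.2 = Int.fract (m * p.1)}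
  have hS : MeasurableSet S :=
    measurableSet_eq_fun measurable_snd (measurable_const.mul measurable_fst).fract
  refine ⟨Sᶜ, hS.compl, ?_, ?_⟩
  · rw [fractGraphMeasure, Measure.map_apply (measurable_fractGraph m) hS.compl]
    convert measure_empty (μ := volume.restrict (Ico (0 : ℝ) 1))
    ext x
    simp [fractGraph, S]
  · have hvol : volume S = 0 := by
      rw [Measure.volume_eq_prod, Measure.prod_apply hS]
      simp [S]
    rw [compl_compl]
    exact Measure.absolutelyContinuous_of_le Measure.restrict_le_self hvol

theorem fractGraphMeasure_gridCell_prod {m i j : ℕ} (hi : i < m) (hj : j < m) :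
    fractGraphMeasure m (gridCell m i ×ˢ gridCell m j) =
      unifSquare (gridCell m i ×ˢ gridCell m j) := by
  have hm : 0 < m := (Nat.zero_le i).trans_lt hi
  have hcell : MeasurableSet (gridCell m i ×ˢ gridCell m j) :=
    measurableSet_Ico.prod measurableSet_Ico
  have hpre : fractGraph m ⁻¹' (gridCell m i ×ˢ gridCell m j) ∩ Ico 0 1 =
      (fun x : ℝ => Int.fract (m * x)) ⁻¹' Ico (j / m) ((j + 1) / m) ∩ gridCell m i := by
    rw [inter_eq_left.mpr (fun x hx => gridCell_subset_Ico hi hx.1)]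
    exact inter_comm _ _
  have hsquare : gridCell m i ×ˢ gridCell m j ⊆ Icc 0 1 ×ˢ Icc 0 1 :=
    prod_mono ((gridCell_subset_Ico hi).trans Ico_subset_Icc_self)
      ((gridCell_subset_Ico hj).trans Ico_subset_Icc_self)
  have hj' : ((j : ℝ) + 1) / m ≤ 1 :=
    (div_le_one (by exact_mod_cast hm)).mpr (by exact_mod_cast hj)
  rw [fractGraphMeasure, Measure.map_apply (measurable_fractGraph m) hcell,
    Measure.restrict_apply ((measurable_fractGraph m) hcell), hpre,
    fract_mul_preimage_Ico_inter_gridCell hm (by positivity) hj', Real.volume_Ico,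
    Measure.restrict_apply hcell, inter_eq_left.mpr hsquare, Measure.volume_eq_prod,
    Measure.prod_prod, volume_gridCell, volume_gridCell, ← ENNReal.ofReal_mul (by positivity)]
  congr 1
  ring

def gridBox {ι : Type*} (m : ℕ) (k : ι → Fin m × Fin m) : Set (ι → ℝ × ℝ) :=
  univ.pi fun l => gridCell m (k l).1 ×ˢ gridCell m (k l).2

theorem measurableSet_gridBox {ι : Type*} [Countable ι] (m : ℕ) (k : ι → Fin m × Fin m) :
    MeasurableSet (gridBox m k) :=
  .univ_pi fun _ => measurableSet_Ico.prod measurableSet_Ico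

theorem pairwise_disjoint_gridBox (ι : Type*) (m : ℕ) :
    Pairwise (Disjoint on gridBox (ι := ι) m) := by
  intro k k' hkk'
  obtain ⟨l, hl⟩ := Function.ne_iff.mp hkk'
  refine disjoint_univ_pi.mpr ⟨l, disjoint_prod.mpr ?_⟩
  by_cases h : (k l).1 = (k' l).1
  · exact .inr (pairwise_disjoint_gridCell m (Fin.val_injective.ne fun h' => hl (Prod.ext h h')))
  · exact .inl (pairwise_disjoint_gridCell m (Fin.val_injective.ne h))

theorem iUnion_gridBox (ι : Type*) {m : ℕ} (hm : 0 < m) :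
    ⋃ k, gridBox (ι := ι) m k = univ.pi fun _ => Ico 0 1 ×ˢ Ico 0 1 := by
  refine (iUnion_subset fun k x hx l _ => ?_).antisymm fun x hx => ?_
  · obtain ⟨h₁, h₂⟩ := hx l (mem_univ l)
    exact ⟨gridCell_subset_Ico (k l).1.isLt h₁, gridCell_subset_Ico (k l).2.isLt h₂⟩
  have hcell : ∀ l, ∃ ij : Fin m × Fin m,
      (x l).1 ∈ gridCell m ij.1 ∧ (x l).2 ∈ gridCell m ij.2 := by
    intro l
    obtain ⟨h₁, h₂⟩ := hx l (mem_univ l)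
    rw [← iUnion_gridCell hm, mem_iUnion] at h₁ h₂
    obtain ⟨⟨i, hi⟩, ⟨j, hj⟩⟩ := And.intro h₁ h₂
    exact ⟨(i, j), hi, hj⟩
  choose k hk using hcell
  exact mem_iUnion.mpr ⟨k, fun l _ => hk l⟩

theorem dist_lt_of_mem_gridBox {ι : Type*} [Fintype ι] {m : ℕ} (hm : 0 < m)
    {k : ι → Fin m × Fin m} {x y : ι → ℝ × ℝ} (hx : x ∈ gridBox m k) (hy : y ∈ gridBox m k) :
    dist x y < 1 / m := by
  rw [dist_pi_lt_iff (one_div_pos.mpr (by exact_mod_cast hm))]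
  intro l
  obtain ⟨hx₁, hx₂⟩ := hx l (mem_univ l)
  obtain ⟨hy₁, hy₂⟩ := hy l (mem_univ l)
  rw [Prod.dist_eq]
  exact max_lt (dist_lt_of_mem_gridCell hx₁ hy₁) (dist_lt_of_mem_gridCell hx₂ hy₂)

theorem pi_fractGraphMeasure_gridBox {ι : Type*} [Fintype ι] (m : ℕ) (k : ι → Fin m × Fin m) :
    Measure.pi (fun _ : ι => fractGraphMeasure m) (gridBox m k) =
      Measure.pi (fun _ : ι => unifSquare) (gridBox m k) := by
  simp only [gridBox, Measure.pi_pi]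
  exact Finset.prod_congr rfl fun l _ => fractGraphMeasure_gridCell_prod (k l).1.isLt (k l).2.isLt

theorem pi_fractGraphMeasure_compl_iUnion_gridBox {ι : Type*} [Fintype ι] {m : ℕ}
    (hm : 0 < m) : Measure.pi (fun _ : ι => fractGraphMeasure m) (⋃ k, gridBox m k)ᶜ = 0 := by
  rw [iUnion_gridBox ι hm,
    prob_compl_eq_zero_iff (.univ_pi fun _ => measurableSet_Ico.prod measurableSet_Ico),
    Measure.pi_pi]
  simp [fractGraphMeasure_Ico_prod_Ico]

theorem pi_fractGraphMeasure_le_pi_unifSquare_thickening {ι : Type*} [Fintype ι] {m : ℕ}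
    (hm : 0 < m) {δ : ℝ} (hδ : 1 / m < δ) (C : Set (ι → ℝ × ℝ)) :
    Measure.pi (fun _ : ι => fractGraphMeasure m) C ≤
      Measure.pi (fun _ : ι => unifSquare) (thickening δ C) :=
  measure_le_measure_thickening_of_eq_on_partition (pairwise_disjoint_gridBox ι m)
    (measurableSet_gridBox m) (pi_fractGraphMeasure_compl_iUnion_gridBox hm)
    (fun _ _ hx _ hy => (dist_lt_of_mem_gridBox hm hx hy).trans hδ)
    (pi_fractGraphMeasure_gridBox m) C

instance : IsFiniteMeasure unifSquare :=
  isFiniteMeasure_restrict.mpr (isCompact_Icc.prod isCompact_Icc).measure_lt_top.ne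

theorem no_uniformly_consistent_independence_test_general
    (n : ℕ) (α : ℝ≥0∞) (hα : α < 1)
    (C : Set (Fin n → ℝ × ℝ))
    (hfrontier : Measure.pi (fun _ : Fin n => unifSquare) (frontier C) = 0)
    (hlevel : Measure.pi (fun _ : Fin n => unifSquare) C ≤ α) :
    ∀ ε : ℝ≥0∞, 0 < ε →
      ∃ F : ProbabilityMeasure (ℝ × ℝ),
        (F : Measure (ℝ × ℝ)) ((Set.Icc (0 : ℝ) 1 ×ˢ Set.Icc (0 : ℝ) 1)ᶜ) = 0 ∧
        (F : Measure (ℝ × ℝ)).map Prod.fst = volume.restrict (Set.Icc (0 : ℝ) 1) ∧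
        (F : Measure (ℝ × ℝ)).map Prod.snd = volume.restrict (Set.Icc (0 : ℝ) 1) ∧
        (F : Measure (ℝ × ℝ)) ⟂ₘ unifSquare ∧
        Measure.pi (fun _ : Fin n => (F : Measure (ℝ × ℝ))) C ≤ α + ε := by
  intro ε hε
  set P := Measure.pi fun _ : Fin n => unifSquare
  have hclosure : P (closure C) < α + ε := calc
    P (closure C) ≤ P C + P (frontier C) :=
      closure_eq_self_union_frontier C ▸ measure_union_le _ _
    _ ≤ α := by rw [hfrontier, add_zero]; exact hlevel
    _ < α + ε := ENNReal.lt_add_right hα.ne_top hε.ne'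
  obtain ⟨δ, hδC, hδ⟩ : ∃ δ, P (thickening δ C) < α + ε ∧ 0 < δ :=
    (((tendsto_order.mp (tendsto_measure_thickening ⟨1, one_pos, measure_ne_top P _⟩)).2 _
      hclosure).and self_mem_nhdsWithin).exists
  obtain ⟨m, hm⟩ := exists_nat_one_div_lt hδ
  refine ⟨⟨fractGraphMeasure (m + 1), inferInstance⟩, fractGraphMeasure_compl_unitSquare _,
    fractGraphMeasure_map_fst _, fractGraphMeasure_map_snd m.succ_pos,
    fractGraphMeasure_mutuallySingular_unifSquare _, ?_⟩
  calc _ ≤ P (thickening δ C) :=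
        pi_fractGraphMeasure_le_pi_unifSquare_thickening m.succ_pos (by exact_mod_cast hm) C
    _ ≤ α + ε := hδC.le

/-- Non-existence of a uniformly consistent test of independence: for any level-`α`
critical region `C` for `n` i.i.d. observations whose frontier is `P₀^⊗n`-null, and any
`ε > 0`, there is a probability measure `F` on `ℝ²`, supported in `[0,1]²`, with both
marginals uniform on `[0,1]`, mutually singular with respect to `P₀` (hence at
total-variation distance 1 from `P₀`), such that `F^⊗n(C) ≤ α + ε`. -/
theorem no_uniformly_consistent_independence_test
    (n : ℕ) (hn : 1 ≤ n) (α : ℝ≥0∞) (hα : α < 1)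
    (C : Set (Fin n → ℝ × ℝ)) (hC : MeasurableSet C)
    (hfrontier : Measure.pi (fun _ : Fin n => unifSquare) (frontier C) = 0)
    (hlevel : Measure.pi (fun _ : Fin n => unifSquare) C ≤ α) :
    ∀ ε : ℝ≥0∞, 0 < ε →
      ∃ F : ProbabilityMeasure (ℝ × ℝ),
        (F : Measure (ℝ × ℝ)) ((Set.Icc (0 : ℝ) 1 ×ˢ Set.Icc (0 : ℝ) 1)ᶜ) = 0 ∧
        (F : Measure (ℝ × ℝ)).map Prod.fst = volume.restrict (Set.Icc (0 : ℝ) 1) ∧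
        (F : Measure (ℝ × ℝ)).map Prod.snd = volume.restrict (Set.Icc (0 : ℝ) 1) ∧
        (F : Measure (ℝ × ℝ)) ⟂ₘ unifSquare ∧
        Measure.pi (fun _ : Fin n => (F : Measure (ℝ × ℝ))) C ≤ α + ε :=
  no_uniformly_consistent_independence_test_general n α hα C hfrontier hlevel
end

section
/- For every integer d ≥ 1, the pushforward of the measure μ_d under the first coordinate projection (x,y) ↦ x equals the uniform distribution on [0,1] (Lebesgue measure restricted to [0,1]), and the same holds for the pushforward under the second coordinate projection (x,y) ↦ y. -/
/-!
Let `δ` be the distance to the nearest centre `c_i` of the dyadic intervals of length `2^(1-d)`.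
Every point of `[0,1]` lies in at least one of these intervals, and in each interval containing
`t` the distance to the centre is `δ t`; hence `γ_d(x,y) = (δ x - δ y) N(x) N(y)`, where
`N(t) ≥ 1` counts the intervals containing `t`, and `BEX_d = {δ x = δ y}`. So `BEX_d` is the
union of the `2^d` zigzag graphs `y = c_j ± δ x` over `[0,1]`, which meet only above the finitely
many `x` with `δ x ∈ {0, 2^(-d)}`.

Mathlib's `ℝ × ℝ` carries the sup metric. As `δ` is `1`-Lipschitz, each graph is then an isometric
copy of `[0,1]` on which `μH[1]` projects to Lebesgue measure, so the first marginal of `μH[1]` on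
`BEX_d` is `2^d` times Lebesgue measure on `[0,1]`; the second follows from the symmetry
`(x,y) ↦ (y,x)`. (Any other norm on `ℝ²` only rescales `μH[1]` on the diagonal segments making up
`BEX_d` by a common factor, which the normalisation removes.)
-/

open MeasureTheory
open scoped ENNReal

/-- The implicit function `γ_d` defining the bisection expanding cross. -/
noncomputable def bexGamma (d : ℕ) (x y : ℝ) : ℝ :=
  ∑ i ∈ Finset.Icc (1 : ℕ) (2 ^ (d - 1)), ∑ j ∈ Finset.Icc (1 : ℕ) (2 ^ (d - 1)),
    (|x - (i : ℝ) / 2 ^ (d - 1) + 1 / 2 ^ d| -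
        |y - (j : ℝ) / 2 ^ (d - 1) + 1 / 2 ^ d|) *
      (if |x - (i : ℝ) / 2 ^ (d - 1) + 1 / 2 ^ d| ≤ 1 / 2 ^ d then 1 else 0) *
      (if |y - (j : ℝ) / 2 ^ (d - 1) + 1 / 2 ^ d| ≤ 1 / 2 ^ d then 1 else 0)

/-- The bisection expanding cross `BEX_d = {(x,y) ∈ [0,1]² : γ_d(x,y) = 0}`. -/
def BEX (d : ℕ) : Set (ℝ × ℝ) :=
  {p | p ∈ Set.Icc (0 : ℝ) 1 ×ˢ Set.Icc (0 : ℝ) 1 ∧ bexGamma d p.1 p.2 = 0}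

/-- `μ_d`: the uniform probability distribution on `BEX_d`, i.e. one-dimensional
Hausdorff measure restricted to `BEX_d` and normalized to total mass one. -/
noncomputable def bexMeasure (d : ℕ) : Measure (ℝ × ℝ) :=
  ((μH[1] : Measure (ℝ × ℝ)) (BEX d))⁻¹ • (μH[1] : Measure (ℝ × ℝ)).restrict (BEX d)

open Set

section Graph

variable {α β : Type*} [EMetricSpace α] [EMetricSpace β]

theorem isometry_graph_of_lipschitzWith_one {f : α → β} (hf : LipschitzWith 1 f) :
    Isometry fun t => (t, f t) := fun t u => by
  rw [Prod.edist_eq]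
  exact max_eq_left (by simpa using hf.edist_le_mul t u)

theorem isometry_swap : Isometry (Prod.swap : α × β → β × α) := fun p q => by
  simp only [Prod.edist_eq, Prod.fst_swap, Prod.snd_swap, max_comm]

variable [MeasurableSpace α] [BorelSpace α] [MeasurableSpace β] [BorelSpace (α × β)]

theorem hausdorffMeasure_preimage_fst_inter_image_graph {f : α → β} (hf : LipschitzWith 1 f)
    {d : ℝ} (hd : 0 ≤ d) (S A : Set α) :
    μH[d] (Prod.fst ⁻¹' A ∩ (fun t => (t, f t)) '' S) = μH[d] (S ∩ A) := by
  rw [inter_comm, ← image_inter_preimage]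
  exact (isometry_graph_of_lipschitzWith_one hf).hausdorffMeasure_image (Or.inl hd) _

end Graph

theorem map_swap_hausdorffMeasure {α : Type*} [EMetricSpace α] [MeasurableSpace α]
    [BorelSpace α] [BorelSpace (α × α)] (d : ℝ) :
    (μH[d] : Measure (α × α)).map Prod.swap = μH[d] := by
  rw [isometry_swap.map_hausdorffMeasure (Or.inr Prod.swap_surjective),
    Prod.swap_surjective.range_eq, Measure.restrict_univ]

theorem MeasureTheory.Measure.map_snd_restrict_eq_map_fst {α : Type*} [MeasurableSpace α]
    {μ : Measure (α × α)} (hμ : μ.map Prod.swap = μ) {s : Set (α × α)}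
    (hs : Prod.swap ⁻¹' s = s) :
    (μ.restrict s).map Prod.snd = (μ.restrict s).map Prod.fst := by
  have hswap : (μ.restrict s).map Prod.swap = μ.restrict s :=
    calc (μ.restrict s).map Prod.swap = (μ.restrict (Prod.swap ⁻¹' s)).map Prod.swap := by rw [hs]
      _ = (μ.map Prod.swap).restrict s := (MeasurableEquiv.prodComm.restrict_map μ s).symm
      _ = μ.restrict s := by rw [hμ]
  conv_rhs => rw [← hswap, Measure.map_map measurable_fst measurable_swap]
  rfl

namespace BEX

variable {d : ℕ}

noncomputable def halfWidth (d : ℕ) : ℝ := 1 / 2 ^ d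

noncomputable def center (d i : ℕ) : ℝ := i / 2 ^ (d - 1) - 1 / 2 ^ d

theorem halfWidth_pos : 0 < halfWidth d := by unfold halfWidth; positivity

theorem two_pow_mul_halfWidth (hd : 1 ≤ d) : (2 : ℝ) ^ (d - 1) * (2 * halfWidth d) = 1 := by
  rw [halfWidth, ← mul_assoc, pow_sub_one_mul (by omega), mul_one_div_cancel (by positivity)]

theorem center_eq (hd : 1 ≤ d) (i : ℕ) : center d i = (2 * i - 1) * halfWidth d := by
  have h2 : (2 : ℝ) ^ d = 2 ^ (d - 1) * 2 := (pow_sub_one_mul (by omega) 2).symm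
  rw [center, halfWidth, h2]
  field_simp

theorem two_halfWidth_le_abs_center_sub (hd : 1 ≤ d) {i j : ℕ} (hij : i ≠ j) :
    2 * halfWidth d ≤ |center d i - center d j| := by
  have hij' : (1 : ℝ) ≤ |(i : ℝ) - j| := by
    have := Int.one_le_abs (sub_ne_zero.2 (Nat.cast_injective.ne hij : (i : ℤ) ≠ j))
    exact_mod_cast this
  have hdiff : center d i - center d j = 2 * halfWidth d * ((i : ℝ) - j) := by
    rw [center_eq hd, center_eq hd]; ring
  rw [hdiff, abs_mul, abs_of_pos (by linarith [halfWidth_pos (d := d)])]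
  nlinarith [halfWidth_pos (d := d)]

theorem exists_abs_sub_center_le (hd : 1 ≤ d) {t : ℝ} (ht : t ∈ Icc (0 : ℝ) 1) :
    ∃ i ∈ Finset.Icc 1 (2 ^ (d - 1)), |t - center d i| ≤ halfWidth d := by
  simp only [center_eq hd, abs_le]
  have hn := two_pow_mul_halfWidth hd
  set n : ℝ := 2 ^ (d - 1)
  set h := halfWidth d
  have hh : 0 < h := halfWidth_pos
  have htn : 0 ≤ t * n := mul_nonneg ht.1 (by positivity)
  refine ⟨max 1 ⌈t * n⌉₊, Finset.mem_Icc.2 ⟨le_max_left _ _, max_le Nat.one_le_two_pow ?_⟩, ?_⟩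
  · exact Nat.ceil_le.2 (by simpa [n] using mul_le_of_le_one_left (by positivity : 0 ≤ n) ht.2)
  · have hceil_le : t * n ≤ ⌈t * n⌉₊ := Nat.le_ceil _
    have hceil_lt : (⌈t * n⌉₊ : ℝ) < t * n + 1 := Nat.ceil_lt_add_one htn
    have hlo : (max 1 ⌈t * n⌉₊ : ℝ) - 1 ≤ t * n := by
      rcases le_total 1 ⌈t * n⌉₊ with h1 | h1
      · rw [max_eq_right (by exact_mod_cast h1)]; linarith
      · rw [max_eq_left (by exact_mod_cast h1)]; linarith
    have hhi : t * n ≤ (max 1 ⌈t * n⌉₊ : ℕ) := hceil_le.trans (by exact_mod_cast le_max_right _ _)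
    have ht_eq : t = t * n * (2 * h) := by rw [mul_assoc, hn, mul_one]
    have hlo' := mul_le_mul_of_nonneg_right hlo (by positivity : 0 ≤ 2 * h)
    have hhi' := mul_le_mul_of_nonneg_right hhi (by positivity : 0 ≤ 2 * h)
    push_cast at hlo' hhi' ⊢
    constructor <;> linarith

theorem mem_Icc_of_abs_sub_center_le (hd : 1 ≤ d) {i : ℕ} (hi : i ∈ Finset.Icc 1 (2 ^ (d - 1)))
    {t : ℝ} (ht : |t - center d i| ≤ halfWidth d) : t ∈ Icc (0 : ℝ) 1 := by
  obtain ⟨hi1, hin⟩ := Finset.mem_Icc.1 hi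
  have h1 : (1 : ℝ) ≤ i := by exact_mod_cast hi1
  have h2 : (i : ℝ) ≤ 2 ^ (d - 1) := by exact_mod_cast hin
  have hn := two_pow_mul_halfWidth hd
  have hh : 0 < halfWidth d := halfWidth_pos
  rw [center_eq hd, abs_le] at ht
  constructor <;> nlinarith

noncomputable def centerDist (d : ℕ) (t : ℝ) : ℝ := Metric.infDist t (range (center d))

theorem lipschitzWith_centerDist : LipschitzWith 1 (centerDist d) := Metric.lipschitz_infDist_pt _

theorem centerDist_nonneg {t : ℝ} : 0 ≤ centerDist d t := Metric.infDist_nonneg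

theorem centerDist_eq (hd : 1 ≤ d) {t : ℝ} {i : ℕ} (ht : |t - center d i| ≤ halfWidth d) :
    centerDist d t = |t - center d i| := by
  refine le_antisymm (Metric.infDist_le_dist_of_mem (mem_range_self i)) ?_
  rw [centerDist, Metric.le_infDist (range_nonempty _)]
  rintro _ ⟨j, rfl⟩
  rw [Real.dist_eq]
  rcases eq_or_ne i j with rfl | hij
  · exact le_rfl
  · have hsep := two_halfWidth_le_abs_center_sub hd hij
    have htri := abs_sub_le (center d i) t (center d j)
    rw [abs_sub_comm (center d i) t] at htri
    linarith

theorem centerDist_le (hd : 1 ≤ d) {t : ℝ} (ht : t ∈ Icc (0 : ℝ) 1) :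
    centerDist d t ≤ halfWidth d := by
  obtain ⟨i, -, hi⟩ := exists_abs_sub_center_le hd ht
  rwa [centerDist_eq hd hi]

noncomputable def activeCount (d : ℕ) (t : ℝ) : ℝ :=
  ∑ i ∈ Finset.Icc 1 (2 ^ (d - 1)), if |t - center d i| ≤ halfWidth d then 1 else 0

theorem activeCount_pos (hd : 1 ≤ d) {t : ℝ} (ht : t ∈ Icc (0 : ℝ) 1) : 0 < activeCount d t := by
  obtain ⟨i, hi, hti⟩ := exists_abs_sub_center_le hd ht
  exact Finset.sum_pos' (fun _ _ => by positivity) ⟨i, hi, by simp [hti]⟩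

theorem bexGamma_eq (hd : 1 ≤ d) (x y : ℝ) :
    bexGamma d x y = (centerDist d x - centerDist d y) * (activeCount d x * activeCount d y) := by
  rw [activeCount, activeCount, Finset.sum_mul_sum, Finset.mul_sum, bexGamma]
  refine Finset.sum_congr rfl fun i _ => ?_
  rw [Finset.mul_sum]
  refine Finset.sum_congr rfl fun j _ => ?_
  have hc : ∀ (t : ℝ) (k : ℕ), t - (k : ℝ) / 2 ^ (d - 1) + 1 / 2 ^ d = t - center d k :=
    fun t k => by rw [center]; ring
  simp only [hc, halfWidth]
  by_cases hx : |x - center d i| ≤ 1 / 2 ^ d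
  · by_cases hy : |y - center d j| ≤ 1 / 2 ^ d
    · simp only [hx, hy, if_true, centerDist_eq hd hx, centerDist_eq hd hy, mul_one]
    · simp only [hy, if_false, mul_zero]
  · simp only [hx, if_false, mul_zero, zero_mul]

theorem mem_BEX_iff (hd : 1 ≤ d) {p : ℝ × ℝ} :
    p ∈ BEX d ↔
      p.1 ∈ Icc (0 : ℝ) 1 ∧ p.2 ∈ Icc (0 : ℝ) 1 ∧ centerDist d p.1 = centerDist d p.2 := by
  simp only [BEX, mem_ofPred_eq, mem_prod, and_assoc]
  refine and_congr_right fun hx => and_congr_right fun hy => ?_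
  rw [bexGamma_eq hd, mul_eq_zero, sub_eq_zero,
    or_iff_left (mul_pos (activeCount_pos hd hx) (activeCount_pos hd hy)).ne']

noncomputable def branchIndex (d : ℕ) : Finset (ℕ × ℝ) := Finset.Icc 1 (2 ^ (d - 1)) ×ˢ {1, -1}

/-- The zigzag `y = c_j + s δ(x)`, `s = ±1`, running through the `j`-th row of squares. -/
noncomputable def branch (d : ℕ) (k : ℕ × ℝ) (t : ℝ) : ℝ := center d k.1 + k.2 * centerDist d t

def branchGraph (d : ℕ) (k : ℕ × ℝ) : Set (ℝ × ℝ) := (fun t => (t, branch d k t)) '' Icc 0 1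

theorem card_branchIndex (hd : 1 ≤ d) : (branchIndex d).card = 2 ^ d := by
  rw [branchIndex, Finset.card_product, Nat.card_Icc, Finset.card_pair (by norm_num),
    Nat.add_sub_cancel, pow_sub_one_mul (by omega)]

theorem abs_sign_of_mem_branchIndex {k : ℕ × ℝ} (hk : k ∈ branchIndex d) : |k.2| = 1 := by
  simp only [branchIndex, Finset.mem_product, Finset.mem_insert, Finset.mem_singleton] at hk
  rcases hk.2 with h | h <;> simp [h]

theorem lipschitzWith_branch {k : ℕ × ℝ} (hk : k ∈ branchIndex d) :
    LipschitzWith 1 (branch d k) :=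
  LipschitzWith.of_dist_le_mul fun t u => by
    simpa [branch, Real.dist_eq, ← mul_sub, abs_mul, abs_sign_of_mem_branchIndex hk] using
      lipschitzWith_centerDist.dist_le_mul t u

theorem abs_branch_sub_center {k : ℕ × ℝ} (hk : k ∈ branchIndex d) (t : ℝ) :
    |branch d k t - center d k.1| = centerDist d t := by
  rw [branch, add_sub_cancel_left, abs_mul, abs_sign_of_mem_branchIndex hk, one_mul,
    abs_of_nonneg centerDist_nonneg]

theorem BEX_eq_biUnion_branchGraph (hd : 1 ≤ d) :
    BEX d = ⋃ k ∈ branchIndex d, branchGraph d k := by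
  ext ⟨x, y⟩
  simp only [mem_BEX_iff hd, mem_iUnion, branchGraph, mem_image, Prod.mk.injEq, exists_prop]
  constructor
  · rintro ⟨hx, hy, hxy⟩
    obtain ⟨j, hj, hyj⟩ := exists_abs_sub_center_le hd hy
    rw [centerDist_eq hd hyj] at hxy
    rcases abs_eq centerDist_nonneg |>.1 hxy.symm with h | h
    · exact ⟨(j, 1), Finset.mem_product.2 ⟨hj, by simp⟩, x, hx, rfl, by simp [branch]; linarith⟩
    · exact ⟨(j, -1), Finset.mem_product.2 ⟨hj, by simp⟩, x, hx, rfl, by simp [branch]; linarith⟩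
  · rintro ⟨k, hk, t, ht, rfl, rfl⟩
    have hdist := abs_branch_sub_center hk t
    have hj := (Finset.mem_product.1 hk).1
    have hle : |branch d k t - center d k.1| ≤ halfWidth d := hdist ▸ centerDist_le hd ht
    exact ⟨ht, mem_Icc_of_abs_sub_center_le hd hj hle, (centerDist_eq hd hle).trans hdist |>.symm⟩

theorem branchGraph_inter_subset (hd : 1 ≤ d) {k k' : ℕ × ℝ} (hk : k ∈ branchIndex d)
    (hk' : k' ∈ branchIndex d) (hne : k ≠ k') :
    branchGraph d k ∩ branchGraph d k' ⊆
      Prod.fst ⁻¹' {t | centerDist d t = 0 ∨ centerDist d t = halfWidth d} ∩ branchGraph d k := by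
  rintro _ ⟨⟨t, ht, rfl⟩, ⟨t', -, heq⟩⟩
  obtain ⟨htt, hy⟩ := Prod.mk.inj heq
  rw [htt] at hy
  refine ⟨?_, t, ht, rfl⟩
  rcases eq_or_ne k.1 k'.1 with hj | hj
  · left
    have hs : k.2 ≠ k'.2 := fun hs => hne (Prod.ext hj hs)
    have : (k.2 - k'.2) * centerDist d t = 0 := by
      simp only [branch, hj] at hy; linarith
    exact (mul_eq_zero.1 this).resolve_left (sub_ne_zero.2 hs)
  · right
    have hsep := two_halfWidth_le_abs_center_sub hd hj
    have htri := abs_sub_le (center d k.1) (branch d k t) (center d k'.1)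
    rw [abs_sub_comm (center d k.1) (branch d k t), abs_branch_sub_center hk, ← hy,
      abs_branch_sub_center hk'] at htri
    exact le_antisymm (centerDist_le hd ht) (by linarith)

theorem volume_Icc_inter_centerDist_eq_zero_or_halfWidth (hd : 1 ≤ d) :
    volume (Icc (0 : ℝ) 1 ∩ {t | centerDist d t = 0 ∨ centerDist d t = halfWidth d}) = 0 := by
  refine measure_mono_null ?_
    ((countable_range fun k : ℤ => (k : ℝ) * halfWidth d).measure_zero volume)
  rintro t ⟨ht, hδ : centerDist d t = 0 ∨ centerDist d t = halfWidth d⟩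
  obtain ⟨i, -, hti⟩ := exists_abs_sub_center_le hd ht
  have hδ' : |t - (2 * i - 1) * halfWidth d| = 0 ∨
      |t - (2 * i - 1) * halfWidth d| = halfWidth d := by
    rwa [centerDist_eq hd hti, center_eq hd] at hδ
  rcases hδ' with h | h
  · exact ⟨2 * i - 1, by push_cast; linear_combination -abs_eq_zero.1 h⟩
  · rcases (abs_eq halfWidth_pos.le).1 h with h | h
    · exact ⟨2 * i, by push_cast; linear_combination -h⟩
    · exact ⟨2 * i - 2, by push_cast; linear_combination -h⟩

theorem hausdorffMeasure_preimage_fst_inter_branchGraph {k : ℕ × ℝ} (hk : k ∈ branchIndex d)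
    (A : Set ℝ) : μH[1] (Prod.fst ⁻¹' A ∩ branchGraph d k) = volume (Icc (0 : ℝ) 1 ∩ A) := by
  rw [branchGraph, hausdorffMeasure_preimage_fst_inter_image_graph (lipschitzWith_branch hk)
    zero_le_one, hausdorffMeasure_real]

theorem measure_branchGraph_inter_branchGraph (hd : 1 ≤ d) {k k' : ℕ × ℝ}
    (hk : k ∈ branchIndex d) (hk' : k' ∈ branchIndex d) (hne : k ≠ k') :
    μH[1] (branchGraph d k ∩ branchGraph d k') = 0 := by
  refine measure_mono_null (branchGraph_inter_subset hd hk hk' hne) ?_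
  rw [hausdorffMeasure_preimage_fst_inter_branchGraph hk]
  exact volume_Icc_inter_centerDist_eq_zero_or_halfWidth hd

theorem isCompact_branchGraph {k : ℕ × ℝ} (hk : k ∈ branchIndex d) :
    IsCompact (branchGraph d k) :=
  isCompact_Icc.image (isometry_graph_of_lipschitzWith_one (lipschitzWith_branch hk)).continuous

theorem hausdorffMeasure_preimage_fst_inter_BEX (hd : 1 ≤ d) {A : Set ℝ} (hA : MeasurableSet A) :
    μH[1] (Prod.fst ⁻¹' A ∩ BEX d) = 2 ^ d * volume (Icc (0 : ℝ) 1 ∩ A) := by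
  rw [BEX_eq_biUnion_branchGraph hd, inter_iUnion₂, measure_biUnion_finset₀ ?disj ?meas,
    Finset.sum_congr rfl fun k hk => hausdorffMeasure_preimage_fst_inter_branchGraph hk A,
    Finset.sum_const, card_branchIndex hd, nsmul_eq_mul, Nat.cast_pow, Nat.cast_ofNat]
  case disj =>
    exact fun k hk k' hk' hne => AEDisjoint.mono
      (measure_branchGraph_inter_branchGraph hd hk hk' hne) inter_subset_right inter_subset_right
  case meas =>
    exact fun k hk => ((measurable_fst hA).inter
      (isCompact_branchGraph hk).isClosed.measurableSet).nullMeasurableSet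

theorem hausdorffMeasure_BEX (hd : 1 ≤ d) : μH[1] (BEX d) = 2 ^ d := by
  simpa using hausdorffMeasure_preimage_fst_inter_BEX hd MeasurableSet.univ

theorem map_fst_restrict_BEX (hd : 1 ≤ d) :
    ((μH[1] : Measure (ℝ × ℝ)).restrict (BEX d)).map Prod.fst =
      (2 : ℝ≥0∞) ^ d • volume.restrict (Icc (0 : ℝ) 1) := by
  ext A hA
  rw [Measure.map_apply measurable_fst hA, Measure.restrict_apply (measurable_fst hA),
    hausdorffMeasure_preimage_fst_inter_BEX hd hA, Measure.smul_apply, Measure.restrict_apply hA,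
    smul_eq_mul, inter_comm]

theorem swap_preimage_BEX (hd : 1 ≤ d) : Prod.swap ⁻¹' BEX d = BEX d := by
  ext p
  simp only [mem_preimage, mem_BEX_iff hd, Prod.fst_swap, Prod.snd_swap, eq_comm]
  tauto

theorem map_snd_restrict_BEX (hd : 1 ≤ d) :
    ((μH[1] : Measure (ℝ × ℝ)).restrict (BEX d)).map Prod.snd =
      (2 : ℝ≥0∞) ^ d • volume.restrict (Icc (0 : ℝ) 1) :=
  (Measure.map_snd_restrict_eq_map_fst (map_swap_hausdorffMeasure 1) (swap_preimage_BEX hd)).trans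
    (map_fst_restrict_BEX hd)

end BEX

/-- Uniform marginals of the uniform distribution on the bisection expanding cross:
for every `d ≥ 1`, both coordinate projections push `μ_d` forward to the uniform
distribution on `[0,1]` (Lebesgue measure restricted to `[0,1]`). -/
theorem bexMeasure_uniform_marginals (d : ℕ) (hd : 1 ≤ d) :
    (bexMeasure d).map Prod.fst = volume.restrict (Set.Icc (0 : ℝ) 1) ∧
    (bexMeasure d).map Prod.snd = volume.restrict (Set.Icc (0 : ℝ) 1) := by
  have hnormalize : ((2 : ℝ≥0∞) ^ d)⁻¹ • (2 : ℝ≥0∞) ^ d • volume.restrict (Icc (0 : ℝ) 1) =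
      volume.restrict (Icc (0 : ℝ) 1) := by
    rw [smul_smul, ENNReal.inv_mul_cancel (by positivity) (by finiteness), one_smul]
  simp only [bexMeasure, BEX.hausdorffMeasure_BEX hd, Measure.map_smul, BEX.map_fst_restrict_BEX hd,
    BEX.map_snd_restrict_BEX hd, hnormalize, and_self]
end

section
/- For all x, y ∈ [0,1], the joint distribution functions of the uniform distributions on the bisection expanding crosses converge to the product of the marginals: μ_d([0,x] × [0,y]) → x·y as d → ∞. -/
open MeasureTheory
open scoped ENNReal

/-!
With `n = 2 ^ (d - 1)`, `BEX_d` is the union of the `n²` crosses formed by the diagonals of the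
cells of the `n × n` grid on `[0, 1]²`. Each cross has one-dimensional Hausdorff measure `2 / n`
(for the sup metric of `ℝ × ℝ`) and two crosses meet in finitely many points. The box
`[0, x] × [0, y]` contains the crosses of `⌊n x⌋ ⌊n y⌋` cells and meets only those of
`(⌊n x⌋ + 1) (⌊n y⌋ + 1)` cells, so `μ_d([0, x] × [0, y])` is squeezed between
`⌊n x⌋ ⌊n y⌋ / n²` and `(⌊n x⌋ + 1) (⌊n y⌋ + 1) / n²`, both of which tend to `x y`.

To recognise the crosses in the zero set of `γ_d`, write `γ_d(x, y) = S(x) N(y) - N(x) S(y)`, where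
`N(x)` counts the cells containing `x` and `S(x)` sums the distances from `x` to their centers.
All these distances are equal, so `γ_d(x, y) = 0` exactly when `x` and `y` are equally far from
the centers of their cells.
-/

open Set Filter Topology Function

theorem Set.Finite.hausdorffMeasure_eq_zero {X : Type*} [EMetricSpace X] [MeasurableSpace X]
    [BorelSpace X] {s : Set X} (hs : s.Finite) {d : ℝ} (hd : 0 < d) : μH[d] s = 0 :=
  hausdorffMeasure_of_dimH_lt (d := ⟨d, hd.le⟩) (by rw [dimH_finite hs]; exact ENNReal.coe_pos.2 hd)

theorem abs_sub_eq_of_le_of_le_of_two_mul_le {x a b r : ℝ} (ha : |x - a| ≤ r) (hb : |x - b| ≤ r)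
    (hab : 2 * r ≤ |a - b|) : |x - a| = r := by
  have := abs_sub_le a x b
  rw [abs_sub_comm a x] at this
  linarith

def diagSegment (c : ℝ × ℝ) (r e : ℝ) : Set (ℝ × ℝ) :=
  (fun t => (t, c.2 + e * (t - c.1))) '' Icc (c.1 - r) (c.1 + r)

/-- Both diagonals of the square of center `c` and half-side `r`. -/
def diagCross (c : ℝ × ℝ) (r : ℝ) : Set (ℝ × ℝ) :=
  {p | |p.1 - c.1| ≤ r ∧ |p.2 - c.2| = |p.1 - c.1|}

-- `ℝ × ℝ` carries the sup metric, in which a segment of slope `±1` is isometric to its shadow.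
theorem isometry_graph_of_abs_eq_one (a b : ℝ) {e : ℝ} (he : |e| = 1) :
    Isometry (fun t : ℝ => ((t, b + e * (t - a)) : ℝ × ℝ)) := by
  refine Isometry.of_dist_eq fun s t => ?_
  rw [Prod.dist_eq, Real.dist_eq, Real.dist_eq,
    show b + e * (s - a) - (b + e * (t - a)) = e * (s - t) by ring, abs_mul, he, one_mul,
    max_self]

theorem hausdorffMeasure_diagSegment (c : ℝ × ℝ) (r : ℝ) {e : ℝ} (he : |e| = 1) :
    μH[1] (diagSegment c r e) = ENNReal.ofReal (2 * r) := by
  rw [diagSegment, (isometry_graph_of_abs_eq_one c.1 c.2 he).hausdorffMeasure_image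
    (Or.inl zero_le_one), hausdorffMeasure_real, Real.volume_Icc]
  ring_nf

theorem diagCross_eq_union (c : ℝ × ℝ) (r : ℝ) :
    diagCross c r = diagSegment c r 1 ∪ diagSegment c r (-1) := by
  ext ⟨x, y⟩
  simp only [diagCross, diagSegment, mem_ofPred_eq, mem_union, mem_image, mem_Icc, Prod.ext_iff]
  constructor
  · rintro ⟨hr, heq⟩
    rw [abs_le] at hr
    rcases abs_eq_abs.1 heq with h | h
    · exact .inl ⟨x, ⟨by linarith, by linarith⟩, rfl, by linarith⟩
    · exact .inr ⟨x, ⟨by linarith, by linarith⟩, rfl, by linarith⟩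
  · rintro (⟨t, ⟨h₁, h₂⟩, rfl, rfl⟩ | ⟨t, ⟨h₁, h₂⟩, rfl, rfl⟩) <;>
      refine ⟨abs_le.2 ⟨by linarith, by linarith⟩, ?_⟩
    · ring_nf
    · rw [show c.2 + -1 * (t - c.1) - c.2 = -(t - c.1) by ring, abs_neg]

theorem diagSegment_inter_subset (c : ℝ × ℝ) (r : ℝ) :
    diagSegment c r 1 ∩ diagSegment c r (-1) ⊆ {c} := by
  rintro _ ⟨⟨t, -, rfl⟩, ⟨s, -, hs⟩⟩
  simp only [Prod.ext_iff] at hs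
  obtain ⟨rfl, h⟩ := hs
  have : s = c.1 := by linarith
  subst this
  ext <;> simp

theorem isClosed_diagCross (c : ℝ × ℝ) (r : ℝ) : IsClosed (diagCross c r) :=
  show IsClosed ({p : ℝ × ℝ | |p.1 - c.1| ≤ r} ∩ {p | |p.2 - c.2| = |p.1 - c.1|}) from
  (isClosed_le (by fun_prop) continuous_const).inter (isClosed_eq (by fun_prop) (by fun_prop))

theorem hausdorffMeasure_diagCross (c : ℝ × ℝ) {r : ℝ} (hr : 0 ≤ r) :
    μH[1] (diagCross c r) = ENNReal.ofReal (4 * r) := by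
  have hdisj : AEDisjoint μH[1] (diagSegment c r 1) (diagSegment c r (-1)) :=
    measure_mono_null (diagSegment_inter_subset c r)
      ((finite_singleton c).hausdorffMeasure_eq_zero one_pos)
  have hmeas : MeasurableSet (diagSegment c r (-1)) :=
    (isCompact_Icc.image (isometry_graph_of_abs_eq_one c.1 c.2 (by norm_num)).continuous
      ).isClosed.measurableSet
  rw [diagCross_eq_union, measure_union₀ hmeas.nullMeasurableSet hdisj,
    hausdorffMeasure_diagSegment c r (by norm_num), hausdorffMeasure_diagSegment c r (by norm_num),
    ← ENNReal.ofReal_add (by positivity) (by positivity)]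
  ring_nf

theorem diagCross_inter_subset {c c' : ℝ × ℝ} {r : ℝ}
    (h : 2 * r ≤ |c.1 - c'.1| ∨ 2 * r ≤ |c.2 - c'.2|) :
    diagCross c r ∩ diagCross c' r ⊆ ({c.1 - r, c.1 + r} ×ˢ {c.2 - r, c.2 + r} : Set (ℝ × ℝ)) := by
  rintro p ⟨⟨h₁, e₁⟩, ⟨h₁', e₁'⟩⟩
  have hx : |p.1 - c.1| = r := by
    rcases h with h | h
    · exact abs_sub_eq_of_le_of_le_of_two_mul_le h₁ h₁' h
    · rw [← e₁]
      exact abs_sub_eq_of_le_of_le_of_two_mul_le (e₁ ▸ h₁) (e₁' ▸ h₁') h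
  have hy : |p.2 - c.2| = r := e₁.trans hx
  have hr : 0 ≤ r := hx ▸ abs_nonneg _
  simp only [mem_prod, mem_insert_iff, mem_singleton_iff]
  constructor
  · rcases (abs_eq hr).1 hx with h | h
    · right; linarith
    · left; linarith
  · rcases (abs_eq hr).1 hy with h | h
    · right; linarith
    · left; linarith

/-- Center of the `i`-th of the `n` cells `[(i - 1)/n, i/n]` of `[0, 1]`. -/
noncomputable def cellCenter (n i : ℕ) : ℝ := (2 * i - 1) / (2 * n)

def gridCross (n : ℕ) (q : ℕ × ℕ) : Set (ℝ × ℝ) :=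
  diagCross (cellCenter n q.1, cellCenter n q.2) (2 * n)⁻¹

/-- For `n = 2 ^ (d - 1)` this is `BEX_d`. -/
def gridCrosses (n : ℕ) : Set (ℝ × ℝ) :=
  ⋃ q ∈ Finset.Icc 1 n ×ˢ Finset.Icc 1 n, gridCross n q

theorem abs_sub_cellCenter_le_iff {n : ℕ} (hn : 0 < n) (i : ℕ) (x : ℝ) :
    |x - cellCenter n i| ≤ (2 * n : ℝ)⁻¹ ↔ (i : ℝ) - 1 ≤ n * x ∧ n * x ≤ i := by
  have hn' : (0 : ℝ) < 2 * n := by positivity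
  have key : x - cellCenter n i = (2 * (n * x) - 2 * i + 1) / (2 * n) := by
    rw [cellCenter]; field_simp; ring
  rw [key, abs_le, inv_eq_one_div, ← neg_div, div_le_div_iff_of_pos_right hn',
    div_le_div_iff_of_pos_right hn']
  constructor <;> rintro ⟨h₁, h₂⟩ <;> constructor <;> linarith

theorem two_mul_inv_le_abs_cellCenter_sub (n : ℕ) {i i' : ℕ} (h : i ≠ i') :
    2 * (2 * n : ℝ)⁻¹ ≤ |cellCenter n i - cellCenter n i'| := by
  have hii' : (1 : ℝ) ≤ |(i : ℝ) - i'| := by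
    rcases Nat.lt_or_gt_of_ne h with h | h
    · exact le_abs.2 (.inr (by linarith [(by exact_mod_cast h : (i : ℝ) + 1 ≤ i')]))
    · exact le_abs.2 (.inl (by linarith [(by exact_mod_cast h : (i' : ℝ) + 1 ≤ i)]))
  rw [cellCenter, cellCenter, ← sub_div, abs_div, abs_of_nonneg (by positivity : (0:ℝ) ≤ 2 * n),
    ← div_eq_mul_inv, show 2 * (i : ℝ) - 1 - (2 * i' - 1) = 2 * (i - i') by ring, abs_mul,
    abs_two]
  gcongr
  linarith

theorem cell_bounds_of_mem_gridCross {n : ℕ} (hn : 0 < n) {q : ℕ × ℕ} {p : ℝ × ℝ}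
    (hp : p ∈ gridCross n q) :
    ((q.1 : ℝ) - 1 ≤ n * p.1 ∧ n * p.1 ≤ q.1) ∧ ((q.2 : ℝ) - 1 ≤ n * p.2 ∧ n * p.2 ≤ q.2) :=
  ⟨(abs_sub_cellCenter_le_iff hn _ _).1 hp.1,
    (abs_sub_cellCenter_le_iff hn _ _).1 (hp.2.trans_le hp.1)⟩

theorem gridCross_subset_unitSquare {n : ℕ} {q : ℕ × ℕ}
    (hq : q ∈ Finset.Icc 1 n ×ˢ Finset.Icc 1 n) :
    gridCross n q ⊆ Icc (0 : ℝ) 1 ×ˢ Icc (0 : ℝ) 1 := by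
  simp only [Finset.mem_product, Finset.mem_Icc] at hq
  have hn : 0 < n := lt_of_lt_of_le hq.1.1 hq.1.2
  have hn' : (0 : ℝ) < n := by exact_mod_cast hn
  obtain ⟨⟨h₁, h₂⟩, h₃, h₄⟩ := hq
  have : (1 : ℝ) ≤ q.1 := by exact_mod_cast h₁
  have : (q.1 : ℝ) ≤ n := by exact_mod_cast h₂
  have : (1 : ℝ) ≤ q.2 := by exact_mod_cast h₃
  have : (q.2 : ℝ) ≤ n := by exact_mod_cast h₄
  intro p hp
  obtain ⟨⟨hx₁, hx₂⟩, hy₁, hy₂⟩ := cell_bounds_of_mem_gridCross hn hp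
  refine ⟨⟨?_, ?_⟩, ?_, ?_⟩ <;> nlinarith

theorem hausdorffMeasure_biUnion_gridCross {n : ℕ} (hn : 0 < n) (F : Finset (ℕ × ℕ)) :
    μH[1] (⋃ q ∈ F, gridCross n q) = F.card * ENNReal.ofReal (2 / n) := by
  have hcross (q : ℕ × ℕ) : μH[1] (gridCross n q) = ENNReal.ofReal (2 / n) := by
    rw [gridCross, hausdorffMeasure_diagCross _ (by positivity)]
    congr 1
    field_simp
    ring
  have hdisj : (F : Set (ℕ × ℕ)).Pairwise (AEDisjoint μH[1] on gridCross n) := by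
    rintro ⟨i, j⟩ - ⟨i', j'⟩ - hq
    refine measure_mono_null (diagCross_inter_subset ?_)
      ((((finite_singleton _).insert _).prod ((finite_singleton _).insert _)
        ).hausdorffMeasure_eq_zero one_pos)
    by_cases hi : i = i'
    · exact .inr (two_mul_inv_le_abs_cellCenter_sub n fun hj => hq (Prod.ext hi hj))
    · exact .inl (two_mul_inv_le_abs_cellCenter_sub n hi)
  rw [measure_biUnion_finset₀ hdisj fun q _ =>
    (isClosed_diagCross _ _).measurableSet.nullMeasurableSet]
  simp only [hcross, Finset.sum_const, nsmul_eq_mul]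

noncomputable def cellCount (n : ℕ) (x : ℝ) : ℝ :=
  ∑ i ∈ Finset.Icc 1 n, if |x - cellCenter n i| ≤ (2 * n : ℝ)⁻¹ then 1 else 0

noncomputable def cellDistSum (n : ℕ) (x : ℝ) : ℝ :=
  ∑ i ∈ Finset.Icc 1 n,
    |x - cellCenter n i| * if |x - cellCenter n i| ≤ (2 * n : ℝ)⁻¹ then 1 else 0

theorem bexGamma_eq {d : ℕ} (hd : d ≠ 0) (x y : ℝ) :
    bexGamma d x y = cellDistSum (2 ^ (d - 1)) x * cellCount (2 ^ (d - 1)) y -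
      cellCount (2 ^ (d - 1)) x * cellDistSum (2 ^ (d - 1)) y := by
  have hpow : (2 : ℝ) ^ d = 2 * 2 ^ (d - 1) := by
    rw [← pow_succ']; congr 1; omega
  have hhalf : (1 : ℝ) / 2 ^ d = (2 * ((2 ^ (d - 1) : ℕ) : ℝ))⁻¹ := by
    rw [hpow]; push_cast; ring
  have hcenter (i : ℕ) (z : ℝ) :
      z - (i : ℝ) / 2 ^ (d - 1) + 1 / 2 ^ d = z - cellCenter (2 ^ (d - 1)) i := by
    rw [cellCenter, hpow]; push_cast; field_simp; ring
  simp only [bexGamma, hcenter]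
  simp only [hhalf, cellDistSum, cellCount, Finset.sum_mul_sum, ← Finset.sum_sub_distrib]
  refine Finset.sum_congr rfl fun i _ => Finset.sum_congr rfl fun j _ => ?_
  ring

theorem abs_sub_cellCenter_eq {n i i' : ℕ} {x : ℝ} (hi : |x - cellCenter n i| ≤ (2 * n : ℝ)⁻¹)
    (hi' : |x - cellCenter n i'| ≤ (2 * n : ℝ)⁻¹) :
    |x - cellCenter n i| = |x - cellCenter n i'| := by
  rcases eq_or_ne i i' with rfl | hne
  · rfl
  · rw [abs_sub_eq_of_le_of_le_of_two_mul_le hi hi' (two_mul_inv_le_abs_cellCenter_sub n hne),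
      abs_sub_eq_of_le_of_le_of_two_mul_le hi' hi (two_mul_inv_le_abs_cellCenter_sub n hne.symm)]

theorem exists_abs_sub_cellCenter_le {n : ℕ} (hn : 0 < n) {x : ℝ} (hx : x ∈ Icc (0 : ℝ) 1) :
    ∃ i ∈ Finset.Icc 1 n, |x - cellCenter n i| ≤ (2 * n : ℝ)⁻¹ := by
  have hnx : 0 ≤ (n : ℝ) * x := mul_nonneg n.cast_nonneg hx.1
  refine ⟨max 1 ⌈(n : ℝ) * x⌉₊, Finset.mem_Icc.2 ⟨le_max_left _ _, max_le hn ?_⟩,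
    (abs_sub_cellCenter_le_iff hn _ _).2 ⟨?_, ?_⟩⟩
  · exact Nat.ceil_le.2 (by simpa using mul_le_of_le_one_right n.cast_nonneg hx.2)
  · rcases le_total ⌈(n : ℝ) * x⌉₊ 1 with h | h
    · simp [max_eq_left h, hnx]
    · rw [max_eq_right h]
      linarith [Nat.ceil_lt_add_one hnx]
  · exact (Nat.le_ceil _).trans (by exact_mod_cast le_max_right _ _)

theorem cellDistSum_eq_mul_cellCount {n i : ℕ} {x : ℝ}
    (hi : |x - cellCenter n i| ≤ (2 * n : ℝ)⁻¹) :
    cellDistSum n x = |x - cellCenter n i| * cellCount n x := by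
  rw [cellDistSum, cellCount, Finset.mul_sum]
  refine Finset.sum_congr rfl fun j _ => ?_
  split_ifs with hj
  · rw [abs_sub_cellCenter_eq hj hi]
  · simp

theorem cellCount_pos {n i : ℕ} (hi : i ∈ Finset.Icc 1 n) {x : ℝ}
    (hx : |x - cellCenter n i| ≤ (2 * n : ℝ)⁻¹) : 0 < cellCount n x :=
  Finset.sum_pos' (fun j _ => by split_ifs <;> norm_num) ⟨i, hi, by rw [if_pos hx]; exact one_pos⟩

theorem bexGamma_eq_zero_iff {d : ℕ} (hd : d ≠ 0) {p : ℝ × ℝ}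
    (hp : p ∈ Icc (0 : ℝ) 1 ×ˢ Icc (0 : ℝ) 1) :
    bexGamma d p.1 p.2 = 0 ↔ p ∈ gridCrosses (2 ^ (d - 1)) := by
  obtain ⟨i, hi, hxi⟩ := exists_abs_sub_cellCenter_le (Nat.two_pow_pos (d - 1)) hp.1
  obtain ⟨j, hj, hyj⟩ := exists_abs_sub_cellCenter_le (Nat.two_pow_pos (d - 1)) hp.2
  have hγ : bexGamma d p.1 p.2 =
      (|p.1 - cellCenter (2 ^ (d - 1)) i| - |p.2 - cellCenter (2 ^ (d - 1)) j|) *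
        (cellCount (2 ^ (d - 1)) p.1 * cellCount (2 ^ (d - 1)) p.2) := by
    rw [bexGamma_eq hd, cellDistSum_eq_mul_cellCount hxi, cellDistSum_eq_mul_cellCount hyj]
    ring
  have hcount := mul_pos (cellCount_pos hi hxi) (cellCount_pos hj hyj)
  simp only [gridCrosses, mem_iUnion, exists_prop, hγ, mul_eq_zero, hcount.ne', or_false,
    sub_eq_zero]
  constructor
  · exact fun h => ⟨(i, j), Finset.mem_product.2 ⟨hi, hj⟩, hxi, h.symm⟩
  · rintro ⟨q, -, hq₁, hq₂⟩
    rw [abs_sub_cellCenter_eq hxi hq₁, ← hq₂, abs_sub_cellCenter_eq (hq₂ ▸ hq₁) hyj]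

theorem BEX_eq_gridCrosses {d : ℕ} (hd : d ≠ 0) : BEX d = gridCrosses (2 ^ (d - 1)) := by
  ext p
  refine ⟨fun hp => (bexGamma_eq_zero_iff hd hp.1).1 hp.2, fun hp => ?_⟩
  obtain ⟨q, hq, hpq⟩ := mem_iUnion₂.1 hp
  have hsq := gridCross_subset_unitSquare hq hpq
  exact ⟨hsq, (bexGamma_eq_zero_iff hd hsq).2 hp⟩

noncomputable def gridCrossMeasure (n : ℕ) : Measure (ℝ × ℝ) :=
  (μH[1] (gridCrosses n))⁻¹ • (μH[1] : Measure (ℝ × ℝ)).restrict (gridCrosses n)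

theorem bexMeasure_eq_gridCrossMeasure {d : ℕ} (hd : d ≠ 0) :
    bexMeasure d = gridCrossMeasure (2 ^ (d - 1)) := by
  rw [bexMeasure, BEX_eq_gridCrosses hd, gridCrossMeasure]

theorem hausdorffMeasure_biUnion_gridCross_Icc_prod_Icc {n : ℕ} (hn : 0 < n) (a b : ℕ) :
    μH[1] (⋃ q ∈ Finset.Icc 1 a ×ˢ Finset.Icc 1 b, gridCross n q) =
      ((a * b : ℕ) : ℝ≥0∞) * ENNReal.ofReal (2 / n) := by
  rw [hausdorffMeasure_biUnion_gridCross hn, Finset.card_product, Nat.card_Icc, Nat.card_Icc,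
    Nat.add_sub_cancel, Nat.add_sub_cancel]

theorem biUnion_gridCross_floor_subset {n : ℕ} (hn : 0 < n) {x y : ℝ} (hx : x ≤ 1) (hy : y ≤ 1) :
    ⋃ q ∈ Finset.Icc 1 ⌊x * n⌋₊ ×ˢ Finset.Icc 1 ⌊y * n⌋₊, gridCross n q ⊆
      (Icc 0 x ×ˢ Icc 0 y) ∩ gridCrosses n := by
  have hn' : (0 : ℝ) < n := by exact_mod_cast hn
  simp only [iUnion_subset_iff, Finset.mem_product, Finset.mem_Icc]
  rintro ⟨i, j⟩ ⟨⟨hi₁, hia⟩, hj₁, hjb⟩ p hp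
  obtain ⟨⟨hx₁, hx₂⟩, hy₁, hy₂⟩ := cell_bounds_of_mem_gridCross hn hp
  have hix : (i : ℝ) ≤ x * n := (Nat.le_floor_iff' (by omega)).1 hia
  have hjy : (j : ℝ) ≤ y * n := (Nat.le_floor_iff' (by omega)).1 hjb
  have : (1 : ℝ) ≤ i := by exact_mod_cast hi₁
  have : (1 : ℝ) ≤ j := by exact_mod_cast hj₁
  refine ⟨⟨⟨by nlinarith, by nlinarith⟩, by nlinarith, by nlinarith⟩, mem_biUnion ?_ hp⟩
  have hxn : ⌊x * n⌋₊ ≤ n := Nat.floor_le_of_le (by nlinarith)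
  have hyn : ⌊y * n⌋₊ ≤ n := Nat.floor_le_of_le (by nlinarith)
  simp only [Finset.coe_product, Finset.coe_Icc, mem_prod, mem_Icc]
  omega

theorem inter_gridCrosses_subset {n : ℕ} (hn : 0 < n) (x y : ℝ) :
    (Icc 0 x ×ˢ Icc 0 y) ∩ gridCrosses n ⊆
      ⋃ q ∈ Finset.Icc 1 (⌊x * n⌋₊ + 1) ×ˢ Finset.Icc 1 (⌊y * n⌋₊ + 1), gridCross n q := by
  have hn' : (0 : ℝ) < n := by exact_mod_cast hn
  rintro p ⟨⟨⟨-, hpx⟩, -, hpy⟩, hp⟩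
  obtain ⟨⟨i, j⟩, hq, hpq⟩ := mem_iUnion₂.1 hp
  obtain ⟨⟨hx₁, -⟩, hy₁, -⟩ := cell_bounds_of_mem_gridCross hn hpq
  have hi : (i : ℝ) < ⌊x * n⌋₊ + 2 := by
    nlinarith [Nat.sub_one_lt_floor (x * n)]
  have hj : (j : ℝ) < ⌊y * n⌋₊ + 2 := by
    nlinarith [Nat.sub_one_lt_floor (y * n)]
  simp only [Finset.mem_product, Finset.mem_Icc] at hq
  refine mem_iUnion₂.2 ⟨(i, j), ?_, hpq⟩
  simp only [Finset.mem_product, Finset.mem_Icc]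
  have : i < ⌊x * n⌋₊ + 2 := by exact_mod_cast hi
  have : j < ⌊y * n⌋₊ + 2 := by exact_mod_cast hj
  omega

theorem ENNReal.toReal_inv_mul_mem_Icc {a ℓ : ℝ≥0∞} {k₁ k₂ m : ℕ} (hℓ₀ : ℓ ≠ 0) (hℓ : ℓ ≠ ∞)
    (h₁ : k₁ * ℓ ≤ a) (h₂ : a ≤ k₂ * ℓ) :
    ((m * ℓ)⁻¹ * a).toReal ∈ Icc ((k₁ : ℝ) / m) ((k₂ : ℝ) / m) := by
  have hk₂ : (k₂ : ℝ≥0∞) * ℓ ≠ ∞ := mul_ne_top (natCast_ne_top _) hℓ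
  have ha : a ≠ ∞ := ne_top_of_le_ne_top hk₂ h₂
  have hℓr : 0 < ℓ.toReal := toReal_pos hℓ₀ hℓ
  have hcancel (k : ℕ) : (k : ℝ) / m = (m * ℓ.toReal)⁻¹ * (k * ℓ.toReal) := by
    field_simp
  have h₁' := toReal_mono ha h₁
  have h₂' := toReal_mono hk₂ h₂
  rw [toReal_mul, toReal_natCast] at h₁' h₂'
  rw [toReal_mul, toReal_inv, toReal_mul, toReal_natCast, hcancel, hcancel]
  exact ⟨by gcongr, by gcongr⟩

theorem gridCrossMeasure_Icc_prod_Icc_mem_Icc {n : ℕ} (hn : 0 < n) {x y : ℝ} (hx : x ≤ 1)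
    (hy : y ≤ 1) :
    (gridCrossMeasure n (Icc 0 x ×ˢ Icc 0 y)).toReal ∈
      Icc ((⌊x * n⌋₊ * ⌊y * n⌋₊ : ℝ) / (n : ℝ) ^ 2)
        ((⌊x * n⌋₊ + 1) * (⌊y * n⌋₊ + 1) / (n : ℝ) ^ 2) := by
  have hcount := hausdorffMeasure_biUnion_gridCross_Icc_prod_Icc hn
  have hbounds := ENNReal.toReal_inv_mul_mem_Icc (m := n * n)
    (ENNReal.ofReal_pos.2 (by positivity)).ne' ENNReal.ofReal_ne_top
    ((hcount _ _).symm.trans_le (measure_mono (biUnion_gridCross_floor_subset hn hx hy)))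
    ((measure_mono (inter_gridCrosses_subset hn x y)).trans (hcount _ _).le)
  rw [gridCrossMeasure, Measure.smul_apply, Measure.restrict_apply
    (measurableSet_Icc.prod measurableSet_Icc), smul_eq_mul,
    show μH[1] (gridCrosses n) = _ from hcount n n]
  convert hbounds using 2 <;> push_cast <;> ring

theorem tendsto_floor_add_mul_floor_add_div_sq (k : ℝ) {x y : ℝ} (hx : 0 ≤ x) (hy : 0 ≤ y) :
    Tendsto (fun n : ℕ => (⌊x * n⌋₊ + k) * (⌊y * n⌋₊ + k) / (n : ℝ) ^ 2) atTop (𝓝 (x * y)) := by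
  have h {z : ℝ} (hz : 0 ≤ z) : Tendsto (fun n : ℕ => (⌊z * n⌋₊ + k) / (n : ℝ)) atTop (𝓝 z) := by
    simpa [add_div] using
      ((tendsto_nat_floor_mul_div_atTop hz).comp tendsto_natCast_atTop_atTop).add
        (tendsto_const_nhds.div_atTop tendsto_natCast_atTop_atTop)
  exact ((h hx).mul (h hy)).congr fun n => by ring

theorem tendsto_gridCrossMeasure_Icc_prod_Icc {x y : ℝ} (hx : x ∈ Icc (0 : ℝ) 1)
    (hy : y ∈ Icc (0 : ℝ) 1) :
    Tendsto (fun n => (gridCrossMeasure n (Icc 0 x ×ˢ Icc 0 y)).toReal) atTop (𝓝 (x * y)) := by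
  have hbounds : ∀ᶠ n in atTop, _ :=
    eventually_gt_atTop 0 |>.mono fun n hn => gridCrossMeasure_Icc_prod_Icc_mem_Icc hn hx.2 hy.2
  exact tendsto_of_tendsto_of_tendsto_of_le_of_le'
    (by simpa using tendsto_floor_add_mul_floor_add_div_sq 0 hx.1 hy.1)
    (tendsto_floor_add_mul_floor_add_div_sq 1 hx.1 hy.1)
    (hbounds.mono fun _ h => h.1) (hbounds.mono fun _ h => h.2)

/-- The uniform distributions on the bisection expanding crosses converge weakly to
independence: for all `x, y ∈ [0,1]`, `μ_d([0,x] × [0,y]) → x·y` as `d → ∞`. -/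
theorem bexMeasure_tendsto_independence (x y : ℝ)
    (hx : x ∈ Set.Icc (0 : ℝ) 1) (hy : y ∈ Set.Icc (0 : ℝ) 1) :
    Filter.Tendsto
      (fun d : ℕ => (bexMeasure d (Set.Icc 0 x ×ˢ Set.Icc 0 y)).toReal)
      Filter.atTop (nhds (x * y)) := by
  have hpow : Tendsto (fun d : ℕ => 2 ^ (d - 1)) atTop atTop :=
    (tendsto_pow_atTop_atTop_of_one_lt one_lt_two).comp (tendsto_sub_atTop_nat 1)
  refine ((tendsto_gridCrossMeasure_Icc_prod_Icc hx hy).comp hpow).congr' ?_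
  filter_upwards [eventually_ne_atTop 0] with d hd
  rw [comp_apply, bexMeasure_eq_gridCrossMeasure hd]
end

section
/- Let d1, d2 ≥ 1 and let p : (Fin d1 → Bool) × (Fin d2 → Bool) → ℝ be strictly positive with Σ over all cells of p(a',b') equal to 1 (the joint probability mass function of a pair of binary random vectors). Then the following are equivalent: (i) λ(a,b) = 1 for every nonzero a : Fin d1 → Bool and nonzero b : Fin d2 → Bool (all cross interaction odds ratios equal 1); (ii) p factorizes as a product of its marginals: p(a,b) = (Σ_{b'} p(a,b')) · (Σ_{a'} p(a',b)) for all cells (a,b), i.e., the two binary random vectors are independent. -/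
/-- `#{k : a k = true and x k = false}`, appearing in the sign
`ε((a,b),(a',b')) = (−1)^{#{k : a k ∧ ¬a' k} + #{k : b k ∧ ¬b' k}}`. -/
def conjInner {m : ℕ} (a x : Fin m → Bool) : ℕ :=
  (Finset.univ.filter (fun k => a k = true ∧ x k = false)).card

/-!
Write `f = log p` and expand it in the Walsh basis of `(ℤ/2)^d1 × (ℤ/2)^d2`: `log λ(s,t)` is
the coefficient of `f` at the character `(s,t)`. By orthogonality of characters, these
coefficients vanish for all nonzero `s`, `t` exactly when `f(x,y)` splits as `g x + h y`,
i.e. when `p(x,y) p(x',y') = p(x,y') p(x',y)` for all cells; since `p` sums to `1`, this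
rank-one condition is the factorization of `p` into its marginals.
-/

open Finset

section Walsh

variable {m : ℕ}

/-- This is the Walsh character `x ↦ (-1)^{#{k : s k ∧ x k}}` up to the sign `(-1)^{#s}`. -/
def walsh (s x : Fin m → Bool) : ℝ := (-1) ^ conjInner s x

lemma walsh_eq_prod (s x : Fin m → Bool) :
    walsh s x = ∏ k, if s k = true ∧ x k = false then -1 else 1 := by
  rw [walsh, conjInner, ← prod_const, prod_filter]

lemma walsh_of_not_exists {s : Fin m → Bool} (hs : ¬∃ k, s k = true) (x : Fin m → Bool) :
    walsh s x = 1 := by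
  push Not at hs
  simp [walsh_eq_prod, hs]

lemma sum_walsh_eq_zero {s : Fin m → Bool} (hs : ∃ k, s k = true) :
    ∑ x, walsh s x = 0 := by
  simp_rw [walsh_eq_prod]
  rw [← Fintype.prod_sum fun k (b : Bool) => if s k = true ∧ b = false then (-1 : ℝ) else 1]
  obtain ⟨k, hk⟩ := hs
  exact prod_eq_zero (mem_univ k) (by simp [hk])

lemma sum_walsh_mul_walsh (x x' : Fin m → Bool) :
    ∑ s, walsh s x * walsh s x' = if x = x' then 2 ^ m else 0 := by
  simp_rw [walsh_eq_prod, ← prod_mul_distrib]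
  rw [← Fintype.prod_sum fun k (b : Bool) =>
    (if b = true ∧ x k = false then (-1 : ℝ) else 1) *
      if b = true ∧ x' k = false then -1 else 1]
  have hcoord : ∀ k, (∑ b : Bool, (if b = true ∧ x k = false then (-1 : ℝ) else 1) *
      if b = true ∧ x' k = false then -1 else 1) = if x k = x' k then 2 else 0 := by
    intro k
    cases x k <;> cases x' k <;> norm_num [Fintype.sum_bool]
  simp_rw [hcoord]
  split_ifs with h
  · simp [h]
  · obtain ⟨k, hk⟩ := Function.ne_iff.mp h
    exact prod_eq_zero (mem_univ k) (if_neg hk)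

end Walsh

section CrossCoeff

variable {d1 d2 : ℕ}

def crossCoeff (f : (Fin d1 → Bool) × (Fin d2 → Bool) → ℝ) (s : Fin d1 → Bool)
    (t : Fin d2 → Bool) : ℝ :=
  ∑ c, walsh s c.1 * walsh t c.2 * f c

lemma sum_walsh_mul_crossCoeff (f : (Fin d1 → Bool) × (Fin d2 → Bool) → ℝ)
    (x : Fin d1 → Bool) (y : Fin d2 → Bool) :
    ∑ s, ∑ t, walsh s x * walsh t y * crossCoeff f s t = 2 ^ d1 * 2 ^ d2 * f (x, y) := by
  calc ∑ s, ∑ t, walsh s x * walsh t y * crossCoeff f s t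
      = ∑ c, (∑ s, walsh s x * walsh s c.1) * (∑ t, walsh t y * walsh t c.2) * f c := by
        simp only [crossCoeff, mul_sum, sum_mul]
        rw [sum_comm_cycle]
        refine sum_congr rfl fun c _ => ?_
        rw [sum_comm]
        exact sum_congr rfl fun t _ => sum_congr rfl fun s _ => by ring
    _ = 2 ^ d1 * 2 ^ d2 * f (x, y) := by
      simp [sum_walsh_mul_walsh, Fintype.sum_prod_type, ite_mul]

lemma add_eq_add_of_crossCoeff_eq_zero {f : (Fin d1 → Bool) × (Fin d2 → Bool) → ℝ}
    (hf : ∀ s t, (∃ k, s k = true) → (∃ k, t k = true) → crossCoeff f s t = 0)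
    (x x' : Fin d1 → Bool) (y y' : Fin d2 → Bool) :
    f (x, y) + f (x', y') = f (x, y') + f (x', y) := by
  -- the weight `walsh s x - walsh s x'` vanishes at `s = 0`, and likewise for `t`
  have hterm : ∀ s t,
      (walsh s x - walsh s x') * (walsh t y - walsh t y') * crossCoeff f s t = 0 := by
    intro s t
    by_cases hs : ∃ k, s k = true
    · by_cases ht : ∃ k, t k = true
      · rw [hf s t hs ht, mul_zero]
      · simp [walsh_of_not_exists ht]
    · simp [walsh_of_not_exists hs]
  have hexpand :
      ∑ s, ∑ t, (walsh s x - walsh s x') * (walsh t y - walsh t y') * crossCoeff f s t =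
        2 ^ d1 * 2 ^ d2 * (f (x, y) + f (x', y') - f (x, y') - f (x', y)) := by
    simp only [sub_mul, mul_sub, sum_sub_distrib, sum_walsh_mul_crossCoeff]
    ring
  simp only [hterm, sum_const_zero] at hexpand
  have h2 : (2 : ℝ) ^ d1 * 2 ^ d2 ≠ 0 := by positivity
  linarith [(mul_eq_zero.mp hexpand.symm).resolve_left h2]

lemma crossCoeff_eq_zero_of_additive {f : (Fin d1 → Bool) × (Fin d2 → Bool) → ℝ}
    {g : (Fin d1 → Bool) → ℝ} {h : (Fin d2 → Bool) → ℝ} (hf : ∀ x y, f (x, y) = g x + h y)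
    {s : Fin d1 → Bool} (hs : ∃ k, s k = true) {t : Fin d2 → Bool} (ht : ∃ k, t k = true) :
    crossCoeff f s t = 0 := by
  simp only [crossCoeff, Fintype.sum_prod_type, hf, mul_add, sum_add_distrib, mul_assoc,
    ← mul_sum, ← sum_mul, sum_walsh_eq_zero hs, zero_mul]
  simp only [mul_left_comm (walsh s _), ← mul_sum, sum_walsh_eq_zero ht]
  simp

lemma prod_zpow_eq_exp_crossCoeff {p : (Fin d1 → Bool) × (Fin d2 → Bool) → ℝ}
    (hp : ∀ c, 0 < p c) (s : Fin d1 → Bool) (t : Fin d2 → Bool) :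
    ∏ c, p c ^ ((-1 : ℤ) ^ (conjInner s c.1 + conjInner t c.2)) =
      Real.exp (crossCoeff (fun c => Real.log (p c)) s t) := by
  simp only [crossCoeff, Real.exp_sum]
  refine prod_congr rfl fun c _ => ?_
  rw [walsh, walsh, ← pow_add, mul_comm, Real.exp_mul, Real.exp_log (hp c),
    ← Real.rpow_intCast]
  push_cast
  rfl

lemma eq_mul_marginals_of_cross_ratio {α β : Type*} [Fintype α] [Fintype β] {p : α × β → ℝ}
    (hsum : ∑ c, p c = 1) (hcross : ∀ a a' b b', p (a, b) * p (a', b') = p (a, b') * p (a', b))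
    (a : α) (b : β) : p (a, b) = (∑ b', p (a, b')) * ∑ a', p (a', b) :=
  calc p (a, b) = p (a, b) * ∑ c, p c := by rw [hsum, mul_one]
    _ = ∑ c : α × β, p (a, c.2) * p (c.1, b) := by
      rw [mul_sum]
      exact sum_congr rfl fun c _ => hcross a c.1 b c.2
    _ = (∑ b', p (a, b')) * ∑ a', p (a', b) := by
      rw [Fintype.sum_prod_type, sum_comm, sum_mul_sum]

theorem cior_one_iff_independent_general {d1 d2 : ℕ}
    (p : (Fin d1 → Bool) × (Fin d2 → Bool) → ℝ) (hp : ∀ c, 0 < p c)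
    (hsum : ∑ c : (Fin d1 → Bool) × (Fin d2 → Bool), p c = 1) :
    (∀ a : Fin d1 → Bool, (∃ k, a k = true) →
      ∀ b : Fin d2 → Bool, (∃ k, b k = true) →
        (∏ c : (Fin d1 → Bool) × (Fin d2 → Bool),
          p c ^ ((-1 : ℤ) ^ (conjInner a c.1 + conjInner b c.2))) = 1) ↔
    (∀ a : Fin d1 → Bool, ∀ b : Fin d2 → Bool,
      p (a, b) = (∑ b' : Fin d2 → Bool, p (a, b')) *
        (∑ a' : Fin d1 → Bool, p (a', b))) := by
  simp only [prod_zpow_eq_exp_crossCoeff hp, Real.exp_eq_one_iff]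
  constructor
  · intro hcoeff
    refine eq_mul_marginals_of_cross_ratio hsum fun a a' b b' => ?_
    have hlog := add_eq_add_of_crossCoeff_eq_zero (fun s t hs ht => hcoeff s hs t ht) a a' b b'
    have hexp : ∀ u v, p u * p v = Real.exp (Real.log (p u) + Real.log (p v)) := fun u v => by
      rw [Real.exp_add, Real.exp_log (hp u), Real.exp_log (hp v)]
    rw [hexp, hexp, hlog]
  · intro hindep a ha b hb
    refine crossCoeff_eq_zero_of_additive (g := fun x => Real.log (∑ b', p (x, b')))
      (h := fun y => Real.log (∑ a', p (a', y))) (fun x y => ?_) ha hb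
    rw [hindep, Real.log_mul (sum_pos (fun _ _ => hp _) univ_nonempty).ne'
      (sum_pos (fun _ _ => hp _) univ_nonempty).ne']

/-- For a strictly positive joint probability mass function `p` on a
`2^d1 × 2^d2` contingency table, all cross interaction odds ratios
`λ(a,b) = Π_{(a',b')} p(a',b')^{ε((a,b),(a',b'))}` (for nonzero `a` and nonzero `b`)
equal `1` if and only if `p` factorizes as the product of its two marginals, i.e. the
two binary random vectors are independent. -/
theorem cior_one_iff_independent {d1 d2 : ℕ} (hd1 : 1 ≤ d1) (hd2 : 1 ≤ d2)
    (p : (Fin d1 → Bool) × (Fin d2 → Bool) → ℝ) (hp : ∀ c, 0 < p c)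
    (hsum : ∑ c : (Fin d1 → Bool) × (Fin d2 → Bool), p c = 1) :
    (∀ a : Fin d1 → Bool, (∃ k, a k = true) →
      ∀ b : Fin d2 → Bool, (∃ k, b k = true) →
        (∏ c : (Fin d1 → Bool) × (Fin d2 → Bool),
          p c ^ ((-1 : ℤ) ^ (conjInner a c.1 + conjInner b c.2))) = 1) ↔
    (∀ a : Fin d1 → Bool, ∀ b : Fin d2 → Bool,
      p (a, b) = (∑ b' : Fin d2 → Bool, p (a, b')) *
        (∑ a' : Fin d1 → Bool, p (a', b))) :=
  cior_one_iff_independent_general p hp hsum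
end CrossCoeff
end

section
/- Let n ≥ 2 and let f, f', g, g' : Fin n → ℝ satisfy Σ_i f(i) = Σ_i f'(i) = Σ_i g(i) = Σ_i g'(i) = 0 and (Σ_i f(i)·f'(i)) · (Σ_i g(i)·g'(i)) = 0. Let π be a uniformly distributed random permutation of Fin n. Then E[(Σ_i f(i)·g(π(i))) · (Σ_j f'(j)·g'(π(j)))] = 0; i.e., the two permutation statistics Σ_i f(i)·g(π(i)) and Σ_j f'(j)·g'(π(j)) are uncorrelated (each having mean zero). -/
/-!
Expanding the product, the correlation is `∑ i j, f i * f' j * C i j` with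
`C i j = ∑_π g (π i) * g' (π j)`. Since the symmetric group is doubly transitive, `C` takes one
value `a` on the diagonal and one value `b` off it. Because `∑ f = 0` the correlation is
`(∑ f f') * (a - b)`. With `N = card α`, summing `C i i` over `i` and `C i j` over `j` gives
`N a = N! ∑ g g'` and `a + (N - 1) b = 0`, hence `(N - 1) (a - b) = N! ∑ g g'`.
-/

open Equiv

lemma Equiv.Perm.exists_apply_eq_and_apply_eq {α : Type*} [DecidableEq α] {i j i' j' : α}
    (hij : i ≠ j) (hij' : i' ≠ j') :
    ∃ τ : Perm α, τ i = i' ∧ τ j = j' := by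
  have hj : swap i i' j ≠ i' := fun h ↦ hij ((swap i i').injective (by simpa using h.symm))
  refine ⟨swap (swap i i' j) j' * swap i i', ?_, by simp⟩
  simpa using swap_apply_of_ne_of_ne hj.symm hij'

variable {α : Type*} [Fintype α] [DecidableEq α]

def permPairSum (g g' : α → ℝ) (i j : α) : ℝ :=
  ∑ π : Perm α, g (π i) * g' (π j)

variable (g g' : α → ℝ)

lemma permPairSum_apply_perm (τ : Perm α) (i j : α) :
    permPairSum g g' (τ i) (τ j) = permPairSum g g' i j :=
  Equiv.sum_comp (Equiv.mulRight τ) fun π ↦ g (π i) * g' (π j)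

lemma permPairSum_diag (i j : α) : permPairSum g g' i i = permPairSum g g' j j := by
  simpa using (permPairSum_apply_perm g g' (swap i j) i i).symm

lemma permPairSum_of_ne {i j i' j' : α} (hij : i ≠ j) (hij' : i' ≠ j') :
    permPairSum g g' i j = permPairSum g g' i' j' := by
  obtain ⟨τ, rfl, rfl⟩ := Perm.exists_apply_eq_and_apply_eq hij hij'
  exact (permPairSum_apply_perm g g' τ i j).symm

lemma sum_permPairSum_diag :
    ∑ i, permPairSum g g' i i = (Fintype.card α).factorial * ∑ i, g i * g' i := by
  simp only [permPairSum]
  rw [Finset.sum_comm]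
  simp_rw [fun π : Perm α ↦ Equiv.sum_comp π fun k ↦ g k * g' k]
  simp [Fintype.card_perm]

lemma sum_permPairSum_right {g' : α → ℝ} (hg' : ∑ i, g' i = 0) (i : α) :
    ∑ j, permPairSum g g' i j = 0 := by
  simp only [permPairSum]
  rw [Finset.sum_comm]
  simp [← Finset.mul_sum, Equiv.sum_comp, hg']

lemma sum_perm_mul_sum_eq_sum_permPairSum (f f' : α → ℝ) :
    ∑ π : Perm α, (∑ i, f i * g (π i)) * (∑ j, f' j * g' (π j)) =
      ∑ i, ∑ j, f i * f' j * permPairSum g g' i j := by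
  simp_rw [permPairSum, Finset.sum_mul_sum, Finset.mul_sum]
  rw [Finset.sum_comm]
  refine Finset.sum_congr rfl fun i _ ↦ ?_
  rw [Finset.sum_comm]
  exact Finset.sum_congr rfl fun j _ ↦ Finset.sum_congr rfl fun π _ ↦ by ring

theorem card_sub_one_mul_sum_perm_mul_sum [Nontrivial α] {f : α → ℝ} (f' : α → ℝ)
    {g' : α → ℝ} (hf : ∑ i, f i = 0) (hg' : ∑ i, g' i = 0) :
    ((Fintype.card α : ℝ) - 1) *
        ∑ π : Perm α, (∑ i, f i * g (π i)) * (∑ j, f' j * g' (π j)) =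
      (Fintype.card α).factorial * (∑ i, f i * f' i) * ∑ i, g i * g' i := by
  obtain ⟨i₀, i₁, hi⟩ := exists_pair_ne α
  set a := permPairSum g g' i₀ i₀
  set b := permPairSum g g' i₀ i₁
  have hC : ∀ i j, permPairSum g g' i j = b + if i = j then a - b else 0 := by
    intro i j
    split_ifs with h
    · subst h; rw [permPairSum_diag g g' i i₀]; ring
    · rw [permPairSum_of_ne g g' h hi, add_zero]
  have hcorr : ∑ π : Perm α, (∑ i, f i * g (π i)) * (∑ j, f' j * g' (π j)) =
      (∑ i, f i * f' i) * (a - b) := by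
    simp_rw [sum_perm_mul_sum_eq_sum_permPairSum, hC, mul_add, mul_ite, mul_zero,
      Finset.sum_add_distrib, Finset.sum_ite_eq, Finset.mem_univ, if_true, ← Finset.sum_mul,
      ← Finset.mul_sum]
    rw [← Finset.sum_mul, hf, zero_mul, zero_mul, zero_add]
  have hdiag : (Fintype.card α : ℝ) * a = (Fintype.card α).factorial * ∑ i, g i * g' i := by
    rw [← sum_permPairSum_diag, Finset.sum_congr rfl fun i _ ↦ permPairSum_diag g g' i i₀]
    simp [a]
  have hrow : (Fintype.card α : ℝ) * b + (a - b) = 0 := by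
    rw [← sum_permPairSum_right g hg' i₀]
    simp [hC, Finset.sum_add_distrib]
  rw [hcorr]
  linear_combination (∑ i, f i * f' i) * (hdiag - hrow)

theorem permutation_statistics_uncorrelated_general {n : ℕ} (hn : 2 ≤ n)
    (f f' g g' : Fin n → ℝ)
    (hf : ∑ i, f i = 0)
    (hg' : ∑ i, g' i = 0)
    (horth : (∑ i, f i * f' i) * (∑ i, g i * g' i) = 0) :
    ((Nat.factorial n : ℝ))⁻¹ *
      ∑ π : Equiv.Perm (Fin n),
        (∑ i, f i * g (π i)) * (∑ j, f' j * g' (π j)) = 0 := by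
  have : Nontrivial (Fin n) := Fin.nontrivial_iff_two_le.mpr hn
  have hn₁ : (n : ℝ) - 1 ≠ 0 := by
    have : (2 : ℝ) ≤ n := by exact_mod_cast hn
    linarith
  have key := card_sub_one_mul_sum_perm_mul_sum g f' hf hg'
  rw [Fintype.card_fin, mul_assoc, horth, mul_zero] at key
  rw [(mul_eq_zero.mp key).resolve_left hn₁, mul_zero]

/-- Under the uniform permutation null, two mean-zero permutation statistics
`Σ_i f(i)·g(π(i))` and `Σ_j f'(j)·g'(π(j))` built from centered score functions with
`(Σ f·f')·(Σ g·g') = 0` are uncorrelated: the expectation (over a uniformly random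
permutation `π` of `Fin n`) of their product vanishes. -/
theorem permutation_statistics_uncorrelated {n : ℕ} (hn : 2 ≤ n)
    (f f' g g' : Fin n → ℝ)
    (hf : ∑ i, f i = 0) (hf' : ∑ i, f' i = 0)
    (hg : ∑ i, g i = 0) (hg' : ∑ i, g' i = 0)
    (horth : (∑ i, f i * f' i) * (∑ i, g i * g' i) = 0) :
    ((Nat.factorial n : ℝ))⁻¹ *
      ∑ π : Equiv.Perm (Fin n),
        (∑ i, f i * g (π i)) * (∑ j, f' j * g' (π j)) = 0 :=
  permutation_statistics_uncorrelated_general hn f f' g g' hf hg' horth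
end

section
/- Let d1, d2 ≥ 1, m = d1 + d2, and let N : (Fin d1 → Bool) × (Fin d2 → Bool) → ℝ be a table of cell counts with total n = Σ_{(a',b')} N(a',b') > 0, all row margins equal (for every a, Σ_{b'} N(a,b') = n/2^{d1}) and all column margins equal (for every b, Σ_{a'} N(a',b) = n/2^{d2}). Define S(a,b) = Σ_{(a',b')} (−1)^{⟨a,a'⟩+⟨b,b'⟩}·N(a',b'). Then the Pearson chi-square statistic decomposes into the squared symmetry statistics over the cross interactions: Σ over all cells (a,b) of (N(a,b) − n/2^m)²/(n/2^m) = (1/n) · Σ over nonzero a and nonzero b of S(a,b)². -/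
/-!
Write `χ_a(x) = (-1)^⟨a,x⟩`. Coordinatewise, `χ_a(x)` is a product of signs, so summing it over
all `a` factorises into a product over coordinates that vanishes as soon as `x ≠ 0`. Hence the
Walsh characters are orthogonal, and Parseval gives `∑_{a,b} S(a,b)² = 2^m ∑_c N(c)²`. Equal row
margins force `S(a,0) = 0` for `a ≠ 0`, equal column margins force `S(0,b) = 0` for `b ≠ 0`, and
`S(0,0) = n`; so the cross interactions carry `2^m ∑_c N(c)² - n²`, which is `n` times the
expanded chi-square statistic `2^m/n ∑_c N(c)² - n`.
-/

/-- `⟨a,x⟩`: the number of coordinates where both `a` and `x` are `true`. -/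
def binInner {m : ℕ} (a x : Fin m → Bool) : ℕ :=
  (Finset.univ.filter (fun k => a k = true ∧ x k = true)).card

open Finset

section Walsh

variable {R : Type*} [CommRing R] {d : ℕ}

theorem binInner_comm (a x : Fin d → Bool) : binInner a x = binInner x a := by
  simp only [binInner, and_comm]

theorem binInner_false_left (x : Fin d → Bool) : binInner (fun _ => false) x = 0 := by
  simp [binInner]

theorem neg_one_pow_binInner (a x : Fin d → Bool) :
    (-1 : R) ^ binInner a x = ∏ k, (-1 : R) ^ (a k && x k).toNat := by
  rw [prod_pow_eq_pow_sum, binInner, card_filter]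
  congr 1
  refine sum_congr rfl fun k _ => ?_
  cases a k <;> cases x k <;> rfl

theorem sum_neg_one_pow_binInner (x : Fin d → Bool) :
    ∑ a, (-1 : R) ^ binInner a x = ∏ k, if x k then 0 else 2 := by
  calc ∑ a, (-1 : R) ^ binInner a x = ∏ k, ∑ v : Bool, (-1 : R) ^ (v && x k).toNat := by
        simp_rw [neg_one_pow_binInner, Fintype.prod_sum]
    _ = ∏ k, if x k then 0 else 2 := prod_congr rfl fun k _ => by cases x k <;> norm_num

theorem sum_neg_one_pow_binInner_of_exists {x : Fin d → Bool} (hx : ∃ k, x k = true) :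
    ∑ a, (-1 : R) ^ binInner a x = 0 := by
  obtain ⟨k, hk⟩ := hx
  rw [sum_neg_one_pow_binInner]
  exact prod_eq_zero (mem_univ k) (by simp [hk])

theorem neg_one_pow_binInner_mul (a x y : Fin d → Bool) :
    (-1 : R) ^ binInner a x * (-1) ^ binInner a y = (-1) ^ binInner a (fun k => x k ^^ y k) := by
  simp only [neg_one_pow_binInner, ← prod_mul_distrib]
  refine prod_congr rfl fun k _ => ?_
  cases a k <;> cases x k <;> cases y k <;> norm_num

theorem sum_neg_one_pow_binInner_mul (x y : Fin d → Bool) :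
    ∑ a, (-1 : R) ^ binInner a x * (-1) ^ binInner a y = if x = y then 2 ^ d else 0 := by
  simp_rw [neg_one_pow_binInner_mul, sum_neg_one_pow_binInner]
  split_ifs with hxy
  · simp [hxy]
  · obtain ⟨k, hk⟩ := Function.ne_iff.mp hxy
    exact prod_eq_zero (mem_univ k) (by revert hk; cases x k <;> cases y k <;> simp)

end Walsh

theorem sum_sq_sum_mul_eq_of_orthogonal {κ ι R : Type*} [Fintype κ] [Fintype ι] [DecidableEq ι]
    [CommSemiring R] (w : κ → ι → R) (M : R)
    (hw : ∀ c c', ∑ k, w k c * w k c' = if c = c' then M else 0) (N : ι → R) :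
    ∑ k, (∑ c, w k c * N c) ^ 2 = M * ∑ c, N c ^ 2 := by
  calc ∑ k, (∑ c, w k c * N c) ^ 2
      = ∑ k, ∑ c, ∑ c', w k c * w k c' * (N c * N c') := by
        refine sum_congr rfl fun k _ => ?_
        rw [sq, sum_mul_sum]
        exact sum_congr rfl fun c _ => sum_congr rfl fun c' _ => by ring
    _ = ∑ c, ∑ c', (∑ k, w k c * w k c') * (N c * N c') := by
        rw [sum_comm]
        refine sum_congr rfl fun c _ => ?_
        rw [sum_comm]
        exact sum_congr rfl fun c' _ => (sum_mul _ _ _).symm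
    _ = M * ∑ c, N c ^ 2 := by
        simp_rw [hw, ite_mul, zero_mul, sum_ite_eq, mem_univ, if_true, mul_sum, sq]

theorem sum_sq_sub_mean_div_mean_eq {ι : Type*} [Fintype ι] [Nonempty ι] (N : ι → ℝ) {n : ℝ}
    (hn : ∑ c, N c = n) (hn0 : n ≠ 0) :
    ∑ c, (N c - n / Fintype.card ι) ^ 2 / (n / Fintype.card ι) =
      Fintype.card ι / n * ∑ c, N c ^ 2 - n := by
  have hcard : (Fintype.card ι : ℝ) ≠ 0 := by positivity
  calc ∑ c, (N c - n / Fintype.card ι) ^ 2 / (n / Fintype.card ι)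
      = ∑ c, (Fintype.card ι / n * N c ^ 2 - 2 * N c + n / Fintype.card ι) :=
        sum_congr rfl fun c _ => by field_simp; ring
    _ = Fintype.card ι / n * ∑ c, N c ^ 2 - n := by
        rw [sum_add_distrib, sum_sub_distrib, ← mul_sum, ← mul_sum, hn, sum_const, card_univ,
          nsmul_eq_mul]
        field_simp
        ring

theorem sum_sum_eq_sum_erase_sum_erase_add {α β M : Type*} [Fintype α] [Fintype β]
    [DecidableEq α] [DecidableEq β] [AddCommMonoid M] (f : α → β → M) (a₀ : α) (b₀ : β)
    (hcol : ∀ a ≠ a₀, f a b₀ = 0) (hrow : ∀ b ≠ b₀, f a₀ b = 0) :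
    ∑ a, ∑ b, f a b = ∑ a ∈ univ.erase a₀, ∑ b ∈ univ.erase b₀, f a b + f a₀ b₀ := by
  have hrow_sum : ∑ b, f a₀ b = f a₀ b₀ := by
    rw [← add_sum_erase _ _ (mem_univ b₀), sum_eq_zero fun b hb => hrow b (ne_of_mem_erase hb),
      add_zero]
  have hcol_sum : ∀ a ≠ a₀, ∑ b, f a b = ∑ b ∈ univ.erase b₀, f a b := fun a ha => by
    rw [← add_sum_erase _ _ (mem_univ b₀), hcol a ha, zero_add]
  rw [← add_sum_erase _ _ (mem_univ a₀), hrow_sum, add_comm]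
  exact congrArg (· + _) (sum_congr rfl fun a ha => hcol_sum a (ne_of_mem_erase ha))

theorem filter_exists_eq_true_eq_erase {d : ℕ} :
    univ.filter (fun a : Fin d → Bool => ∃ k, a k = true) = univ.erase (fun _ => false) := by
  ext a
  simp [funext_iff]

section SymmetryStatistic

variable {R : Type*} [CommRing R] {d₁ d₂ : ℕ} (N : (Fin d₁ → Bool) × (Fin d₂ → Bool) → R)

def symmetryStatistic (a : Fin d₁ → Bool) (b : Fin d₂ → Bool) : R :=
  ∑ c, (-1 : R) ^ (binInner a c.1 + binInner b c.2) * N c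

theorem symmetryStatistic_false_false :
    symmetryStatistic N (fun _ => false) (fun _ => false) = ∑ c, N c := by
  simp [symmetryStatistic, binInner_false_left]

theorem symmetryStatistic_false_right {r : R} (hrow : ∀ x, ∑ y, N (x, y) = r)
    {a : Fin d₁ → Bool} (ha : ∃ k, a k = true) :
    symmetryStatistic N a (fun _ => false) = 0 := by
  simp_rw [symmetryStatistic, Fintype.sum_prod_type, binInner_false_left, add_zero, ← mul_sum,
    hrow, ← sum_mul, binInner_comm a, sum_neg_one_pow_binInner_of_exists ha, zero_mul]

theorem symmetryStatistic_false_left {r : R} (hcol : ∀ y, ∑ x, N (x, y) = r)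
    {b : Fin d₂ → Bool} (hb : ∃ k, b k = true) :
    symmetryStatistic N (fun _ => false) b = 0 := by
  simp_rw [symmetryStatistic, Fintype.sum_prod_type_right, binInner_false_left, zero_add,
    ← mul_sum, hcol, ← sum_mul, binInner_comm b, sum_neg_one_pow_binInner_of_exists hb, zero_mul]

theorem sum_sum_symmetryStatistic_sq :
    ∑ a, ∑ b, symmetryStatistic N a b ^ 2 = 2 ^ (d₁ + d₂) * ∑ c, N c ^ 2 := by
  rw [← Fintype.sum_prod_type']
  refine sum_sq_sum_mul_eq_of_orthogonal _ _ (fun c c' => ?_) N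
  calc ∑ k : (Fin d₁ → Bool) × (Fin d₂ → Bool),
        (-1 : R) ^ (binInner k.1 c.1 + binInner k.2 c.2) *
          (-1) ^ (binInner k.1 c'.1 + binInner k.2 c'.2)
      = (∑ a, (-1 : R) ^ binInner a c.1 * (-1) ^ binInner a c'.1) *
          ∑ b, (-1 : R) ^ binInner b c.2 * (-1) ^ binInner b c'.2 := by
        rw [Fintype.sum_prod_type, sum_mul_sum]
        exact sum_congr rfl fun a _ => sum_congr rfl fun b _ => by ring
    _ = if c = c' then 2 ^ (d₁ + d₂) else 0 := by
        rw [sum_neg_one_pow_binInner_mul, sum_neg_one_pow_binInner_mul]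
        by_cases h₁ : c.1 = c'.1 <;> by_cases h₂ : c.2 = c'.2 <;>
          simp [h₁, h₂, Prod.ext_iff, pow_add]

end SymmetryStatistic

theorem chi_square_decomposition_general {d1 d2 : ℕ}
    (N : (Fin d1 → Bool) × (Fin d2 → Bool) → ℝ) (n : ℝ)
    (hn : n = ∑ c : (Fin d1 → Bool) × (Fin d2 → Bool), N c) (hpos : 0 < n)
    (hrow : ∀ a : Fin d1 → Bool, (∑ b' : Fin d2 → Bool, N (a, b')) = n / 2 ^ d1)
    (hcol : ∀ b : Fin d2 → Bool, (∑ a' : Fin d1 → Bool, N (a', b)) = n / 2 ^ d2) :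
    (∑ c : (Fin d1 → Bool) × (Fin d2 → Bool),
        (N c - n / 2 ^ (d1 + d2)) ^ 2 / (n / 2 ^ (d1 + d2))) =
      (1 / n) *
        ∑ a ∈ Finset.univ.filter (fun a : Fin d1 → Bool => ∃ k, a k = true),
          ∑ b ∈ Finset.univ.filter (fun b : Fin d2 → Bool => ∃ k, b k = true),
            (∑ c : (Fin d1 → Bool) × (Fin d2 → Bool),
              (-1 : ℝ) ^ (binInner a c.1 + binInner b c.2) * N c) ^ 2 := by
  have hcard : (Fintype.card ((Fin d1 → Bool) × (Fin d2 → Bool)) : ℝ) = 2 ^ (d1 + d2) := by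
    simp [Fintype.card_prod, pow_add]
  have hcross := sum_sum_eq_sum_erase_sum_erase_add (fun a b => symmetryStatistic N a b ^ 2)
    (fun _ => false) (fun _ => false)
    (fun a ha => by
      rw [symmetryStatistic_false_right N hrow (by simpa [funext_iff] using ha), sq, zero_mul])
    (fun b hb => by
      rw [symmetryStatistic_false_left N hcol (by simpa [funext_iff] using hb), sq, zero_mul])
  rw [sum_sum_symmetryStatistic_sq, symmetryStatistic_false_false, ← hn] at hcross
  rw [← hcard, sum_sq_sub_mean_div_mean_eq N hn.symm hpos.ne', hcard,
    filter_exists_eq_true_eq_erase, filter_exists_eq_true_eq_erase]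
  change _ = 1 / n * ∑ a ∈ _, ∑ b ∈ _, symmetryStatistic N a b ^ 2
  rw [eq_sub_of_add_eq hcross.symm]
  field_simp

/-- Orthogonal decomposition of the Pearson chi-square statistic: for a
`2^d1 × 2^d2` contingency table `N` with total count `n > 0` and equal row and
column margins, the chi-square statistic equals `(1/n)` times the sum of the squared
symmetry statistics `S(a,b)` over the cross interactions (nonzero `a` and nonzero `b`). -/
theorem chi_square_decomposition {d1 d2 : ℕ} (hd1 : 1 ≤ d1) (hd2 : 1 ≤ d2)
    (N : (Fin d1 → Bool) × (Fin d2 → Bool) → ℝ) (n : ℝ)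
    (hn : n = ∑ c : (Fin d1 → Bool) × (Fin d2 → Bool), N c) (hpos : 0 < n)
    (hrow : ∀ a : Fin d1 → Bool, (∑ b' : Fin d2 → Bool, N (a, b')) = n / 2 ^ d1)
    (hcol : ∀ b : Fin d2 → Bool, (∑ a' : Fin d1 → Bool, N (a', b)) = n / 2 ^ d2) :
    (∑ c : (Fin d1 → Bool) × (Fin d2 → Bool),
        (N c - n / 2 ^ (d1 + d2)) ^ 2 / (n / 2 ^ (d1 + d2))) =
      (1 / n) *
        ∑ a ∈ Finset.univ.filter (fun a : Fin d1 → Bool => ∃ k, a k = true),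
          ∑ b ∈ Finset.univ.filter (fun b : Fin d2 → Bool => ∃ k, b k = true),
            (∑ c : (Fin d1 → Bool) × (Fin d2 → Bool),
              (-1 : ℝ) ^ (binInner a c.1 + binInner b c.2) * N c) ^ 2 :=
  chi_square_decomposition_general N n hn hpos hrow hcol
end
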